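/- arXiv:1909.03257 — 7 statements merged into one kernel-verified Lean document; each statement's English description precedes it below -/
import Mathlib

section
/- Let s ≥ 2 and let (H_n)_{n≥1} be the intertwining sequence of s sequences (η^{(j)}_i)_{i≥0} ⊂ ℂ (j = 1,…,s) of pairwise distinct elements. If N = binom(d+s, s) for some d ≥ 0, then k(N) = (d,0,…,0) and for every z = (z_1,…,z_s) ∈ ℂ^s one has VDM(H_1,…,H_N,z) = [∏_{i=0}^{d} (z_s − η^{(s)}_i)] · VDM(H_1,…,H_N). -/
/-!
In graded lexicographic order the monomials of degree at most `d` come first; there are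
`binom(d+s, s)` of them, the last being `z_1^d` and the next one `z_s^(d+1)`. In the matrix of
`VDM(H_1, …, H_N, z)` the last row is `z_s^(d+1)` and all rows `z_s^m` with `m ≤ d` occur above
it, so it may be replaced by `p(z_s)`, `p = ∏_{i ≤ d} (X - η^{(s)}_i)`, without changing the
determinant. Since `k_s(n) ≤ d` for `n ≤ N`, the new row vanishes at `H_1, …, H_N`, and expanding
along it gives `p(z_s) · VDM(H_1, …, H_N)`.
-/

open Finset

/-- Graded lexicographic strict order on `ℕ^s`: first compare total degrees,
then compare lexicographically. -/
def GradedLexLt {s : ℕ} (k l : Fin s → ℕ) : Prop :=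
  (∑ i, k i) < (∑ i, l i) ∨
    ((∑ i, k i) = (∑ i, l i) ∧ ∃ t : Fin s, (∀ u, u < t → k u = l u) ∧ k t < l t)

/-- Generalized Vandermonde determinant `det [e_i(G_j)]` where the monomials `e_i`
are given by the enumeration `kEnum` of `ℕ^s`. -/
noncomputable def VDM {s : ℕ} (kEnum : ℕ → Fin s → ℕ) {N : ℕ}
    (G : Fin N → Fin s → ℂ) : ℂ :=
  Matrix.det (Matrix.of fun i j : Fin N => ∏ t, G j t ^ kEnum (i : ℕ) t)

open Polynomial

namespace GradedLexLt

variable {s : ℕ} {k l : Fin s → ℕ}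

lemma sum_le (h : GradedLexLt k l) : ∑ i, k i ≤ ∑ i, l i := by
  rcases h with h | ⟨h, _⟩ <;> omega

lemma asymm (h : GradedLexLt k l) : ¬ GradedLexLt l k := by
  rintro (h' | ⟨hsum', t', heq', hlt'⟩) <;> rcases h with h | ⟨hsum, t, heq, hlt⟩ <;> try omega
  rcases lt_trichotomy t t' with htt | rfl | htt
  · have := heq' t htt; omega
  · omega
  · have := heq t' htt; omega

lemma lt_single_of_isBot {i₀ : Fin s} (hi₀ : IsBot i₀) {d : ℕ} (hk : ∑ i, k i ≤ d)
    (hne : k ≠ Pi.single i₀ d) : GradedLexLt k (Pi.single i₀ d) := by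
  unfold GradedLexLt
  rw [Fintype.sum_pi_single']
  rcases hk.lt_or_eq with hlt | hsum
  · exact .inl hlt
  refine .inr ⟨hsum, i₀, fun u hu => absurd (hi₀ u) hu.not_ge, ?_⟩
  rw [Pi.single_eq_same]
  refine (hsum ▸ single_le_sum (fun _ _ => Nat.zero_le _) (mem_univ i₀)).lt_of_ne fun hk₀ => hne ?_
  ext j
  rcases eq_or_ne j i₀ with rfl | hj
  · simp [hk₀]
  · have := sum_le_sum_of_subset (f := k) (subset_univ {i₀, j})
    rw [sum_pair hj.symm] at this
    simp [hj]
    omega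

lemma single_lt_of_isTop {i₁ : Fin s} (hi₁ : IsTop i₁) (hne : k ≠ Pi.single i₁ (∑ i, k i)) :
    GradedLexLt (Pi.single i₁ (∑ i, k i)) k := by
  obtain ⟨u, hu, hku⟩ : ∃ u ≠ i₁, k u ≠ 0 := by
    by_contra! h
    rw [Fintype.sum_eq_single i₁ h] at hne
    exact hne (funext fun j => by rcases eq_or_ne j i₁ with rfl | hj <;> simp [*])
  obtain ⟨t, ht, hmin⟩ := wellFounded_lt.has_min {v | k v ≠ 0} ⟨u, hku⟩
  have ht₁ : t < i₁ := (not_lt.1 (hmin u hku)).trans_lt ((hi₁ u).lt_of_ne hu)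
  refine .inr ⟨Fintype.sum_pi_single' .., t, fun v hv => ?_, ?_⟩
  · rw [Pi.single_eq_of_ne (hv.trans ht₁).ne]
    by_contra hkv
    exact hmin v (Ne.symm hkv) hv
  · rw [Pi.single_eq_of_ne ht₁.ne]
    exact Nat.pos_of_ne_zero ht

end GradedLexLt

lemma IsLowerSet.eq_Iio_ncard {A : Set ℕ} (hA : IsLowerSet A) (hfin : A.Finite) :
    A = Set.Iio A.ncard := by
  obtain rfl | ⟨a, rfl⟩ := hA.eq_univ_or_Iio
  · exact absurd hfin Set.infinite_univ
  · rw [Set.ncard_Iio_nat]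

lemma Finset.Nat.card_antidiagonalTuple (s m : ℕ) :
    #(antidiagonalTuple s m) = s.multichoose m := by
  rw [← Nat.card_eq_finsetCard, Nat.card_congr ((Equiv.subtypeEquivRight fun _ =>
    Nat.mem_antidiagonalTuple).trans (Sym.equivNatSumOfFintype (Fin s) m).symm),
    Sym.natCard_sym_eq_multichoose, Nat.card_fin]

lemma ncard_setOf_sum_le (s d : ℕ) :
    {k : Fin s → ℕ | ∑ i, k i ≤ d}.ncard = (d + s).choose s := by
  have hS : {k : Fin s → ℕ | ∑ i, k i ≤ d} =
      ↑((range (d + 1)).biUnion (Nat.antidiagonalTuple s)) := by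
    ext k
    simp [Nat.mem_antidiagonalTuple]
  rw [hS, Set.ncard_coe_finset, card_biUnion,
    sum_congr rfl fun m _ => Nat.card_antidiagonalTuple s m, Nat.sum_range_multichoose]
  intro a _ b _ hab
  exact disjoint_left.2 fun k ha hb => hab ((Nat.mem_antidiagonalTuple.1 ha).symm.trans
    (Nat.mem_antidiagonalTuple.1 hb))

section Enumeration

variable {s : ℕ} {kEnum : ℕ → Fin s → ℕ} (hbij : Function.Bijective kEnum)
  (hmono : ∀ a b : ℕ, a < b → GradedLexLt (kEnum a) (kEnum b))
include hbij hmono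

lemma sum_le_iff_lt_choose (d n : ℕ) : ∑ i, kEnum n i ≤ d ↔ n < (d + s).choose s := by
  set A := kEnum ⁻¹' {k | ∑ i, k i ≤ d}
  have hlower : IsLowerSet A := fun a b hba ha =>
    hba.eq_or_lt.elim (fun h => h ▸ ha) fun h => (hmono b a h).sum_le.trans ha
  have hcard : A.ncard = (d + s).choose s := by
    rw [Set.ncard_preimage_of_injective_subset_range hbij.1 (by simp [hbij.2.range_eq]),
      ncard_setOf_sum_le]
  have hfin : A.Finite := Set.finite_of_ncard_pos (hcard ▸ Nat.choose_pos (by omega))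
  rw [← hcard, ← Set.mem_Iio, ← hlower.eq_Iio_ncard hfin]
  rfl

lemma apply_le_of_lt_choose {d n : ℕ} (hn : n < (d + s).choose s) (t : Fin s) : kEnum n t ≤ d :=
  (single_le_sum (fun _ _ => Nat.zero_le _) (mem_univ t)).trans
    ((sum_le_iff_lt_choose hbij hmono d n).2 hn)

lemma exists_lt_choose_eq_single (t : Fin s) {d m : ℕ} (hm : m ≤ d) :
    ∃ n < (d + s).choose s, kEnum n = Pi.single t m := by
  obtain ⟨n, hn⟩ := hbij.2 (Pi.single t m)
  exact ⟨n, (sum_le_iff_lt_choose hbij hmono d n).1 (by simpa [hn]), hn⟩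

lemma kEnum_choose_sub_one {i₀ : Fin s} (hi₀ : IsBot i₀) (d : ℕ) :
    kEnum ((d + s).choose s - 1) = Pi.single i₀ d := by
  have hpos := Nat.choose_pos (show s ≤ d + s by omega)
  obtain ⟨n, hn⟩ := hbij.2 (Pi.single i₀ d)
  have hnN : n < (d + s).choose s := (sum_le_iff_lt_choose hbij hmono d n).1 (by simp [hn])
  by_contra hne
  have hlt : n < (d + s).choose s - 1 :=
    (Nat.le_sub_one_of_lt hnN).lt_of_ne fun h => hne (h ▸ hn)
  refine (hmono n _ hlt).asymm ?_
  rw [hn]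
  exact .lt_single_of_isBot hi₀ ((sum_le_iff_lt_choose hbij hmono d _).2 (by omega)) hne

lemma kEnum_choose {i₁ : Fin s} (hi₁ : IsTop i₁) (d : ℕ) :
    kEnum ((d + s).choose s) = Pi.single i₁ (d + 1) := by
  set N := (d + s).choose s
  have hdeg : d < ∑ i, kEnum N i :=
    not_le.1 fun h => (sum_le_iff_lt_choose hbij hmono d N).1 h |>.false
  obtain ⟨n, hn⟩ := hbij.2 (Pi.single i₁ (d + 1))
  have hNn : N ≤ n := not_lt.1 fun h => by
    simpa [hn] using (sum_le_iff_lt_choose hbij hmono d n).2 h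
  obtain rfl | hlt := hNn.eq_or_lt
  · exact hn
  have hlt' := hmono N n hlt
  rw [hn] at hlt'
  have hsum : ∑ i, kEnum N i = d + 1 := by
    have := hlt'.sum_le
    simp only [Fintype.sum_pi_single'] at this
    omega
  by_contra hne
  exact hlt'.asymm (hsum ▸ .single_lt_of_isTop hi₁ (hsum ▸ hne))

end Enumeration

namespace Matrix

variable {R : Type*} [CommRing R]

lemma det_updateRow_add_sum_smul {n : Type*} [Fintype n] [DecidableEq n] {ι : Type*}
    (M : Matrix n n R) (p : n) (F : Finset ι) (c : ι → R) (f : ι → n) (hf : ∀ i ∈ F, f i ≠ p) :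
    (M.updateRow p (M p + ∑ i ∈ F, c i • M (f i))).det = M.det := by
  classical
  induction F using Finset.induction_on with
  | empty => simp
  | insert a F ha ih =>
    rw [sum_insert ha, add_left_comm, det_updateRow_add, det_updateRow_smul,
      det_updateRow_eq_zero (hf a (mem_insert_self a F)), mul_zero, zero_add,
      ih fun i hi => hf i (mem_insert_of_mem hi)]

lemma det_updateRow_eval_of_monic {n : Type*} [Fintype n] [DecidableEq n] (M : Matrix n n R)
    (x : n → R) {P : R[X]} (hP : P.Monic) {p : n} (hp : M p = fun j => x j ^ P.natDegree)
    (hrows : ∀ m < P.natDegree, ∃ i ≠ p, M i = fun j => x j ^ m) :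
    (M.updateRow p fun j => P.eval (x j)).det = M.det := by
  have : Nonempty n := ⟨p⟩
  choose! f hfp hf using hrows
  convert det_updateRow_add_sum_smul M p (range P.natDegree) P.coeff f
    fun m hm => hfp m (mem_range.1 hm) using 3
  ext j
  conv_lhs => rw [hP.as_sum]
  simp only [eval_add, eval_pow, eval_X, eval_finsetSum, eval_mul, eval_C, Pi.add_apply, hp,
    Finset.sum_apply, Pi.smul_apply, smul_eq_mul]
  exact congrArg _ (sum_congr rfl fun m hm => by rw [hf m (mem_range.1 hm)])

lemma det_updateRow_last_of_castSucc_eq_zero {N : ℕ} (M : Matrix (Fin (N + 1)) (Fin (N + 1)) R)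
    (r : Fin (N + 1) → R) (hr : ∀ j : Fin N, r j.castSucc = 0) :
    (M.updateRow (Fin.last N) r).det =
      r (Fin.last N) * (M.submatrix Fin.castSucc Fin.castSucc).det := by
  rw [det_succ_row _ (Fin.last N), Fin.sum_univ_castSucc]
  have hsub : (M.updateRow (Fin.last N) r).submatrix Fin.castSucc Fin.castSucc =
      M.submatrix Fin.castSucc Fin.castSucc := by
    ext i j
    simp
  simp [hr, Fin.succAbove_last, hsub, ← two_mul]

end Matrix

section Vandermonde

variable {s : ℕ} (kEnum : ℕ → Fin s → ℕ)

def vdmMatrix {N : ℕ} (G : Fin N → Fin s → ℂ) : Matrix (Fin N) (Fin N) ℂ :=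
  Matrix.of fun i j => ∏ t, G j t ^ kEnum i t

variable {kEnum}

lemma vdmMatrix_row_of_eq_single {N : ℕ} (G : Fin N → Fin s → ℂ) {i : Fin N} {t : Fin s} {m : ℕ}
    (h : kEnum i = Pi.single t m) : vdmMatrix kEnum G i = fun j => G j t ^ m := by
  ext j
  simp [vdmMatrix, h, Pi.single_apply]

lemma vdmMatrix_snoc_submatrix_castSucc {N : ℕ} (G : Fin N → Fin s → ℂ) (z : Fin s → ℂ) :
    (vdmMatrix kEnum (Fin.snoc G z)).submatrix Fin.castSucc Fin.castSucc = vdmMatrix kEnum G := by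
  ext i j
  simp [vdmMatrix]

theorem VDM_snoc_eq_eval_mul {N : ℕ} (G : Fin N → Fin s → ℂ) (z : Fin s → ℂ) (t : Fin s)
    {P : ℂ[X]} (hP : P.Monic) (hlast : kEnum N = Pi.single t P.natDegree)
    (hlow : ∀ m < P.natDegree, ∃ n < N, kEnum n = Pi.single t m)
    (hroots : ∀ j, P.eval (G j t) = 0) :
    VDM kEnum (Fin.snoc G z) = P.eval (z t) * VDM kEnum G := by
  have hrows : ∀ m < P.natDegree, ∃ i ≠ Fin.last N,
      vdmMatrix kEnum (Fin.snoc G z) i =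
        fun j => (Fin.snoc G z : Fin (N + 1) → Fin s → ℂ) j t ^ m := by
    intro m hm
    obtain ⟨n, hn, hkn⟩ := hlow m hm
    exact ⟨Fin.castSucc ⟨n, hn⟩, (Fin.castSucc_lt_last _).ne, vdmMatrix_row_of_eq_single _ hkn⟩
  change (vdmMatrix kEnum _).det = _ * (vdmMatrix kEnum G).det
  rw [← Matrix.det_updateRow_eval_of_monic _ _ hP (vdmMatrix_row_of_eq_single _ hlast) hrows,
    Matrix.det_updateRow_last_of_castSucc_eq_zero _ _ (by simp [hroots]),
    vdmMatrix_snoc_submatrix_castSucc]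
  simp

end Vandermonde

/-- Here `kEnum n` stands for the paper's `k(n+1)` and `H n` for `H_{n+1}`. -/
theorem statement0 {s : ℕ} (hs : 2 ≤ s)
    (kEnum : ℕ → Fin s → ℕ) (hbij : Function.Bijective kEnum)
    (hmono : ∀ a b : ℕ, a < b → GradedLexLt (kEnum a) (kEnum b))
    (η : Fin s → ℕ → ℂ)
    (H : ℕ → Fin s → ℂ) (hH : ∀ n j, H n j = η j (kEnum n j))
    (d N : ℕ) (hN : N = Nat.choose (d + s) s) :
    kEnum (N - 1) = (fun j : Fin s => if j = ⟨0, by omega⟩ then d else 0) ∧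
    ∀ z : Fin s → ℂ,
      VDM kEnum (Fin.snoc (fun i : Fin N => H i) z) =
        (∏ i ∈ range (d + 1), (z ⟨s - 1, by omega⟩ - η ⟨s - 1, by omega⟩ i)) *
          VDM kEnum (fun i : Fin N => H i) := by
  subst hN
  refine ⟨?_, fun z => ?_⟩
  · rw [kEnum_choose_sub_one hbij hmono (i₀ := ⟨0, by omega⟩) (fun u => Nat.zero_le u.val) d]
    ext j
    simp [Pi.single_apply]
  set t : Fin s := ⟨s - 1, by omega⟩
  set P : ℂ[X] := ∏ i ∈ range (d + 1), (X - C (η t i))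
  have hP : P.Monic := monic_prod_of_monic _ _ fun i _ => monic_X_sub_C _
  have hdeg : P.natDegree = d + 1 := by simp [P]
  have hlow (m : ℕ) (hm : m < P.natDegree) : ∃ n < (d + s).choose s, kEnum n = Pi.single t m :=
    exists_lt_choose_eq_single hbij hmono t (by omega)
  have hroots (j : Fin ((d + s).choose s)) : P.eval (H j t) = 0 := by
    simp only [P, eval_prod, eval_sub, eval_X, eval_C, hH]
    exact prod_eq_zero (mem_range.2 (Nat.lt_succ_of_le (apply_le_of_lt_choose hbij hmono j.isLt t)))
      (sub_self _)
  have hlast : kEnum ((d + s).choose s) = Pi.single t P.natDegree :=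
    hdeg ▸ kEnum_choose hbij hmono (fun u => Nat.le_sub_one_of_lt u.isLt) d
  simpa [P, eval_prod] using VDM_snoc_eq_eval_mul _ z t hP hlast hlow hroots
end

section
/- Let s ≥ 2 and let (H_n)_{n≥1} be the intertwining sequence of s sequences (η^{(j)}_i)_{i≥0} ⊂ ℂ (j = 1,…,s) of pairwise distinct elements. Then for every N ≥ 1 one has VDM(H_1,…,H_N) ≠ 0; equivalently, the set Ω_N = {H_1,…,H_N} is unisolvent for the polynomial space 𝒫_N = span{e_1,…,e_N}. -/
/-!
Use the Newton basis `w_n(x) = ∏_t ∏_{i < k_t(n)} (x_t - η^{(t)}_i)`. Every monomial of `w_n`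
has exponent `≤ k(n)` componentwise, hence comes no later than `k(n)` in the graded
lexicographic order, and `x^{k(n)}` has coefficient `1`: the matrix `C` expressing the `w_n` in
the monomials is unitriangular. On the other hand `w_n(H_m) = 0` for `m < n`, because some
coordinate satisfies `k_t(m) < k_t(n)`, while `w_n(H_n) ≠ 0` since the `η^{(t)}` are injective.
So `C · V = [w_i(H_j)]` is triangular with nonzero diagonal, and `det V = det (C · V) ≠ 0`.
-/

open Finset

open Polynomial Lagrange

theorem not_gradedLexLt_of_le {s : ℕ} {k l : Fin s → ℕ} (h : k ≤ l) : ¬ GradedLexLt l k := by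
  rintro (hsum | ⟨-, t, -, ht⟩)
  · exact (sum_le_sum fun i _ => h i).not_gt hsum
  · exact (h t).not_gt ht

def GradedLexStrictMono {s : ℕ} (kEnum : ℕ → Fin s → ℕ) : Prop :=
  ∀ a b : ℕ, a < b → GradedLexLt (kEnum a) (kEnum b)

theorem GradedLexStrictMono.le_of_le {s : ℕ} {kEnum : ℕ → Fin s → ℕ}
    (hmono : GradedLexStrictMono kEnum) {a b : ℕ} (h : kEnum a ≤ kEnum b) : a ≤ b :=
  le_of_not_gt fun hba => not_gradedLexLt_of_le h (hmono b a hba)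

theorem GradedLexStrictMono.injective {s : ℕ} {kEnum : ℕ → Fin s → ℕ}
    (hmono : GradedLexStrictMono kEnum) : Function.Injective kEnum :=
  fun _ _ h => le_antisymm (hmono.le_of_le h.le) (hmono.le_of_le h.ge)

theorem prod_eval_eq_sum_coeff_mul_prod_pow {R ι : Type*} [CommRing R] [Fintype ι]
    [DecidableEq ι] (P : ι → R[X]) (S : Finset (ι → ℕ))
    (hS : ∀ g : ι → ℕ, (∀ t, g t ≤ (P t).natDegree) → g ∈ S) (x : ι → R) :
    ∏ t, (P t).eval (x t) = ∑ g ∈ S, (∏ t, (P t).coeff (g t)) * ∏ t, x t ^ g t := by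
  set D := Fintype.piFinset fun t => range ((P t).natDegree + 1)
  have hDS : D ⊆ S := fun g hg =>
    hS g fun t => Nat.lt_succ_iff.mp (mem_range.mp (Fintype.mem_piFinset.mp hg t))
  have hvanish : ∀ g ∈ S, g ∉ D → (∏ t, (P t).coeff (g t)) * ∏ t, x t ^ g t = 0 := by
    intro g _ hg
    obtain ⟨t, ht⟩ : ∃ t, (P t).natDegree < g t := by
      simpa [D, Fintype.mem_piFinset, Nat.lt_succ_iff] using hg
    rw [prod_eq_zero (mem_univ t) (coeff_eq_zero_of_natDegree_lt ht), zero_mul]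
  calc ∏ t, (P t).eval (x t)
      = ∏ t, ∑ d ∈ range ((P t).natDegree + 1), (P t).coeff d * x t ^ d :=
        prod_congr rfl fun t _ => eval_eq_sum_range (x t)
    _ = ∑ g ∈ D, ∏ t, (P t).coeff (g t) * x t ^ g t := prod_univ_sum _ _
    _ = ∑ g ∈ S, (∏ t, (P t).coeff (g t)) * ∏ t, x t ^ g t := by
        simp_rw [prod_mul_distrib]
        exact sum_subset hDS hvanish

section NewtonBasis

variable {R : Type*} [CommRing R] {s : ℕ}

def monomialVandermonde (kEnum : ℕ → Fin s → ℕ) {N : ℕ} (G : Fin N → Fin s → R) :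
    Matrix (Fin N) (Fin N) R :=
  Matrix.of fun i j => ∏ t, G j t ^ kEnum i t

def intertwine (η : Fin s → ℕ → R) (kEnum : ℕ → Fin s → ℕ) (n : ℕ) : Fin s → R :=
  fun t => η t (kEnum n t)

noncomputable def newtonFactor (η : Fin s → ℕ → R) (k : Fin s → ℕ) (t : Fin s) : R[X] :=
  nodal (range (k t)) (η t)

noncomputable def newtonCoeffMatrix (η : Fin s → ℕ → R) (kEnum : ℕ → Fin s → ℕ) (N : ℕ) :
    Matrix (Fin N) (Fin N) R :=
  Matrix.of fun i m => ∏ t, (newtonFactor η (kEnum i) t).coeff (kEnum m t)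

variable (η : Fin s → ℕ → R) {kEnum : ℕ → Fin s → ℕ}

theorem newtonCoeffMatrix_mul_monomialVandermonde [Nontrivial R]
    (hmono : GradedLexStrictMono kEnum)
    (hsurj : Function.Surjective kEnum) {N : ℕ} (G : Fin N → Fin s → R) (i j : Fin N) :
    (newtonCoeffMatrix η kEnum N * monomialVandermonde kEnum G) i j =
      ∏ t, (newtonFactor η (kEnum i) t).eval (G j t) := by
  have hinj : Set.InjOn (fun m : Fin N => kEnum m) (univ : Finset (Fin N)) := fun a _ b _ h =>
    Fin.val_injective (hmono.injective h)
  rw [prod_eval_eq_sum_coeff_mul_prod_pow _ (univ.image fun m : Fin N => kEnum m), sum_image hinj]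
  · rfl
  intro g hg
  obtain ⟨m, rfl⟩ := hsurj g
  have hm : m ≤ i := hmono.le_of_le fun t => by
    simpa [newtonFactor, natDegree_nodal] using hg t
  exact mem_image_of_mem _ (mem_univ (⟨m, hm.trans_lt i.isLt⟩ : Fin N))

theorem newtonCoeffMatrix_isLowerTriangular [Nontrivial R]
    (hmono : GradedLexStrictMono kEnum) (N : ℕ) :
    (newtonCoeffMatrix η kEnum N).IsLowerTriangular := by
  intro i m (him : i < m)
  obtain ⟨t, ht⟩ : ∃ t, kEnum i t < kEnum m t := by
    by_contra! h
    exact (hmono.le_of_le h).not_gt him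
  refine prod_eq_zero (mem_univ t) (coeff_eq_zero_of_natDegree_lt ?_)
  rwa [newtonFactor, natDegree_nodal, card_range]

theorem det_newtonCoeffMatrix [Nontrivial R]
    (hmono : GradedLexStrictMono kEnum) (N : ℕ) :
    (newtonCoeffMatrix η kEnum N).det = 1 := by
  rw [Matrix.det_of_isLowerTriangular _ (newtonCoeffMatrix_isLowerTriangular η hmono N)]
  refine prod_eq_one fun i _ => ?_
  rw [newtonCoeffMatrix, Matrix.of_apply]
  refine prod_eq_one fun t _ => ?_
  simpa [newtonFactor, natDegree_nodal] using
    (nodal_monic : (nodal (range (kEnum i t)) (η t)).Monic).coeff_natDegree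

theorem isUpperTriangular_newtonCoeffMatrix_mul_monomialVandermonde [Nontrivial R]
    (hmono : GradedLexStrictMono kEnum)
    (hsurj : Function.Surjective kEnum) (N : ℕ) :
    (newtonCoeffMatrix η kEnum N *
      monomialVandermonde kEnum fun j : Fin N => intertwine η kEnum j).IsUpperTriangular := by
  intro i j (hji : j < i)
  rw [newtonCoeffMatrix_mul_monomialVandermonde η hmono hsurj]
  obtain ⟨t, ht⟩ : ∃ t, kEnum j t < kEnum i t := by
    by_contra! h
    exact (hmono.le_of_le h).not_gt hji
  exact prod_eq_zero (mem_univ t) (eval_nodal_at_node (mem_range.mpr ht))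

theorem prod_eval_newtonFactor_intertwine_ne_zero [IsDomain R]
    (hdist : ∀ t, Function.Injective (η t)) (n : ℕ) :
    ∏ t, (newtonFactor η (kEnum n) t).eval (intertwine η kEnum n t) ≠ 0 :=
  prod_ne_zero_iff.mpr fun t _ =>
    eval_nodal_not_at_node fun _ hl h => (mem_range.mp hl).ne (hdist t h).symm

theorem det_monomialVandermonde_intertwine_ne_zero [IsDomain R]
    (hmono : GradedLexStrictMono kEnum)
    (hsurj : Function.Surjective kEnum) (hdist : ∀ t, Function.Injective (η t)) (N : ℕ) :
    (monomialVandermonde kEnum fun j : Fin N => intertwine η kEnum j).det ≠ 0 := by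
  have h := Matrix.det_of_isUpperTriangular
    (isUpperTriangular_newtonCoeffMatrix_mul_monomialVandermonde η hmono hsurj N)
  rw [Matrix.det_mul, det_newtonCoeffMatrix η hmono, one_mul] at h
  rw [h, prod_ne_zero_iff]
  intro i _
  rw [newtonCoeffMatrix_mul_monomialVandermonde η hmono hsurj]
  exact prod_eval_newtonFactor_intertwine_ne_zero η hdist i

end NewtonBasis

-- `kEnum n` stands for the paper's `k(n+1)` and `H n` for `H_{n+1}`.
theorem statement3_general {s : ℕ}
    (kEnum : ℕ → Fin s → ℕ) (hbij : Function.Bijective kEnum)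
    (hmono : ∀ a b : ℕ, a < b → GradedLexLt (kEnum a) (kEnum b))
    (η : Fin s → ℕ → ℂ) (hdist : ∀ j, Function.Injective (η j))
    (H : ℕ → Fin s → ℂ) (hH : ∀ n j, H n j = η j (kEnum n j)) :
    ∀ N : ℕ, 1 ≤ N → VDM kEnum (fun i : Fin N => H i) ≠ 0 := by
  intro N _
  obtain rfl : H = intertwine η kEnum := funext fun n => funext (hH n)
  exact det_monomialVandermonde_intertwine_ne_zero η hmono hbij.surjective hdist N

/-- for intertwining sequences of pairwise distinct one-dimensional
sequences, `VDM(H_1,…,H_N) ≠ 0` for every `N ≥ 1` (i.e. `Ω_N` is unisolvent for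
`𝒫_N`). Here `kEnum n` stands for the paper's `k(n+1)` and `H n` for `H_{n+1}`. -/
theorem statement3 {s : ℕ} (hs : 2 ≤ s)
    (kEnum : ℕ → Fin s → ℕ) (hbij : Function.Bijective kEnum)
    (hmono : ∀ a b : ℕ, a < b → GradedLexLt (kEnum a) (kEnum b))
    (η : Fin s → ℕ → ℂ) (hdist : ∀ j, Function.Injective (η j))
    (H : ℕ → Fin s → ℂ) (hH : ∀ n j, H n j = η j (kEnum n j)) :
    ∀ N : ℕ, 1 ≤ N → VDM kEnum (fun i : Fin N => H i) ≠ 0 :=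
  statement3_general kEnum hbij hmono η hdist H hH
end

section
/- For j = 1,…,s, let K_j ⊂ ℂ be a compact set and (η^{(j)}_i)_{i≥0} ⊂ K_j any sequence of pairwise distinct elements with η^{(j)}_0 ∈ ∂K_j, and let (H_n)_{n≥1} be their intertwining sequence. Then the following are equivalent: (i) (H_n)_{n≥1} is a Leja sequence for K_1 × ⋯ × K_s; (ii) for every j = 1,…,s, (η^{(j)}_i)_{i≥0} is a Leja sequence for K_j. -/
/-
Index points from `0`, as the sequence `H` does, and write `e_n(z) = z^{k(n)}`. The polynomial
`Q_N(z) = ∏ⱼ ∏_{i < k_j(N)} (z_j - η^{(j)}_i)` is `e_N` plus monomials `z^β` with `β ≤ k(N)`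
coordinatewise and `β ≠ k(N)`; these precede `k(N)` in the graded order, so `Q_N - e_N` is a
combination of `e_0, …, e_{N-1}`. Adding that combination of rows to the last row of the
Vandermonde matrix of `H_0, …, H_{N-1}, z` turns it into `(Q_N(H_0), …, Q_N(H_{N-1}), Q_N(z))`,
and `Q_N(H_m) = 0` for `m < N` because some coordinate of `k(m)` is smaller than that of `k(N)`.
Hence `VDM(H_0, …, H_{N-1}, z) = Q_N(z) · VDM(H_0, …, H_{N-1})`, and the second factor is nonzero
since each `η^{(j)}` is injective. Maximizing `|VDM(H_0, …, H_{N-1}, ·)|` over `K_1 × ⋯ × K_s`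
therefore decouples into maximizing the one-dimensional Leja products coordinate by coordinate.
-/

open Finset

/-- A (multidimensional) Leja sequence for a compact set `K ⊂ ℂ^s`: the sequence lies
in `K`, starts on the boundary, and each new point maximizes the modulus of the
generalized Vandermonde determinant over `K`.  `G n` stands for the paper's `H_{n+1}`. -/
def IsLejaSeqMulti {s : ℕ} (kEnum : ℕ → Fin s → ℕ) (K : Set (Fin s → ℂ))
    (G : ℕ → Fin s → ℂ) : Prop :=
  (∀ n, G n ∈ K) ∧ G 0 ∈ frontier K ∧
    ∀ N : ℕ, 1 ≤ N →
      IsGreatest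
        ((fun z => ‖VDM kEnum (Fin.snoc (fun i : Fin N => G i) z)‖) '' K)
        ‖VDM kEnum (Fin.snoc (fun i : Fin N => G i) (G N))‖

/-- A one-dimensional Leja sequence for a compact set `K ⊂ ℂ`. -/
def IsLejaSeq1 (K : Set ℂ) (η : ℕ → ℂ) : Prop :=
  (∀ n, η n ∈ K) ∧ η 0 ∈ frontier K ∧
    ∀ k : ℕ, 1 ≤ k →
      IsGreatest ((fun z => ∏ i ∈ range k, ‖z - η i‖) '' K)
        (∏ i ∈ range k, ‖η k - η i‖)

theorem GradedLexLt.not_of_le {s : ℕ} {k l : Fin s → ℕ} (hle : ∀ j, l j ≤ k j) :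
    ¬ GradedLexLt k l := by
  rintro (hsum | ⟨hsum, t, -, ht⟩)
  · exact (sum_le_sum fun j _ => hle j).not_gt hsum
  · have heq := (sum_eq_sum_iff_of_le fun j _ => hle j).1 hsum.symm t (mem_univ t)
    omega

section GradedEnumeration

variable {s : ℕ} {kEnum : ℕ → Fin s → ℕ}

theorem exists_lt_of_gradedLex (hmono : ∀ a b : ℕ, a < b → GradedLexLt (kEnum a) (kEnum b))
    {n N : ℕ} (h : n < N) : ∃ j, kEnum n j < kEnum N j := by
  by_contra! hle
  exact GradedLexLt.not_of_le hle (hmono n N h)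

variable (hbij : Function.Bijective kEnum)
  (hmono : ∀ a b : ℕ, a < b → GradedLexLt (kEnum a) (kEnum b))
include hbij hmono

theorem exists_le_of_gradedLex {N : ℕ} {β : Fin s → ℕ} (hle : ∀ j, β j ≤ kEnum N j) :
    ∃ m ≤ N, kEnum m = β := by
  obtain ⟨m, rfl⟩ := hbij.2 β
  refine ⟨m, not_lt.1 fun hNm => GradedLexLt.not_of_le hle (hmono N m hNm), rfl⟩

theorem enum_zero_of_gradedLex : kEnum 0 = 0 := by
  obtain ⟨m, hm0, hm⟩ :=
    exists_le_of_gradedLex hbij hmono (N := 0) (β := 0) fun _ => Nat.zero_le _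
  rwa [Nat.le_zero.1 hm0] at hm

end GradedEnumeration

theorem mem_frontier_univ_pi {ι : Type*} [Finite ι] {X : ι → Type*}
    [∀ i, TopologicalSpace (X i)] {K : ∀ i, Set (X i)} {x : ∀ i, X i}
    (hcl : ∀ i, x i ∈ closure (K i)) {i : ι} (hi : x i ∈ frontier (K i)) :
    x ∈ frontier (Set.univ.pi K) := by
  refine ⟨by rw [closure_pi_set]; exact fun j _ => hcl j, fun hint => hi.2 ?_⟩
  rw [interior_pi_set Set.finite_univ] at hint
  exact hint i (Set.mem_univ i)

theorem exists_prod_prod_sub_eq_sum_piFinset {R : Type*} [CommRing R] [Nontrivial R] {s : ℕ}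
    (κ : Fin s → ℕ) (a : Fin s → ℕ → R) :
    ∃ c : (Fin s → ℕ) → R, c κ = 1 ∧
      (∀ β ∉ Fintype.piFinset fun j => range (κ j + 1), c β = 0) ∧
      ∀ x : Fin s → R, ∏ j, ∏ i ∈ range (κ j), (x j - a j i) =
        ∑ β ∈ Fintype.piFinset (fun j => range (κ j + 1)), c β * ∏ j, x j ^ β j := by
  open Polynomial in
  set p : Fin s → R[X] := fun j => ∏ i ∈ range (κ j), (X - C (a j i))
  have hmonic : ∀ j, (p j).Monic := fun j => monic_prod_of_monic _ _ fun i _ => monic_X_sub_C _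
  have hdeg : ∀ j, (p j).natDegree = κ j := fun j => by
    simp [p, natDegree_prod_of_monic _ _ fun i _ => monic_X_sub_C (a j i)]
  refine ⟨fun β => ∏ j, (p j).coeff (β j), ?_, ?_, fun x => ?_⟩
  · exact prod_eq_one fun j _ => hdeg j ▸ (hmonic j).coeff_natDegree
  · intro β hβ
    obtain ⟨j, hj⟩ : ∃ j, κ j < β j := by
      simpa [Fintype.mem_piFinset, Nat.lt_succ_iff] using hβ
    exact prod_eq_zero (mem_univ j) (coeff_eq_zero_of_natDegree_lt (hdeg j ▸ hj))
  · have heval : ∀ j, ∏ i ∈ range (κ j), (x j - a j i) =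
        ∑ d ∈ range (κ j + 1), (p j).coeff d * x j ^ d := fun j => by
      rw [← eval_eq_sum_range' ((hdeg j).trans_lt (Nat.lt_succ_self _))]
      simp [p, eval_prod]
    simp_rw [heval, prod_univ_sum, prod_mul_distrib]

theorem exists_prod_prod_sub_eq_sum_range {R : Type*} [CommRing R] [Nontrivial R] {s : ℕ}
    {kEnum : ℕ → Fin s → ℕ} (hbij : Function.Bijective kEnum)
    (hmono : ∀ a b : ℕ, a < b → GradedLexLt (kEnum a) (kEnum b)) (N : ℕ) (a : Fin s → ℕ → R) :
    ∃ c : ℕ → R, c N = 1 ∧ ∀ x : Fin s → R, ∏ j, ∏ i ∈ range (kEnum N j), (x j - a j i) =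
      ∑ m ∈ range (N + 1), c m * ∏ j, x j ^ kEnum m j := by
  obtain ⟨c, hc1, hc0, hexpand⟩ := exists_prod_prod_sub_eq_sum_piFinset (kEnum N) a
  refine ⟨fun m => c (kEnum m), hc1, fun x => ?_⟩
  rw [hexpand, ← sum_image (f := fun β => c β * ∏ j, x j ^ β j) fun m _ m' _ h => hbij.1 h]
  refine sum_subset (fun β hβ => ?_) fun β _ hβ => by rw [hc0 β hβ, zero_mul]
  obtain ⟨m, hm, rfl⟩ := exists_le_of_gradedLex hbij hmono (β := β) fun j =>
    Nat.lt_succ_iff.1 (mem_range.1 (Fintype.mem_piFinset.1 hβ j))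
  exact mem_image_of_mem _ (mem_range.2 (Nat.lt_succ_of_le hm))

theorem Matrix.det_eq_mul_det_submatrix_castSucc {R : Type*} [CommRing R] {N : ℕ}
    (M : Matrix (Fin (N + 1)) (Fin (N + 1)) R) (c : Fin (N + 1) → R) (hc : c (Fin.last N) = 1)
    (hr : ∀ m : Fin N, (∑ k, c k • M k) m.castSucc = 0) :
    M.det = (∑ k, c k • M k) (Fin.last N) * (M.submatrix Fin.castSucc Fin.castSucc).det := by
  have hrow : M.det = (M.updateRow (Fin.last N) (∑ k, c k • M k)).det := by
    rw [det_updateRow_sum, hc, one_smul]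
  rw [hrow, det_succ_row _ (Fin.last N), Fin.sum_univ_castSucc, submatrix_updateRow_succAbove,
    Fin.succAbove_last]
  simp [hr]

section Intertwining

variable {s : ℕ} {kEnum : ℕ → Fin s → ℕ} (hbij : Function.Bijective kEnum)
  (hmono : ∀ a b : ℕ, a < b → GradedLexLt (kEnum a) (kEnum b))
  {η : Fin s → ℕ → ℂ} {H : ℕ → Fin s → ℂ} (hH : ∀ n j, H n j = η j (kEnum n j))
include hbij hmono hH

theorem VDM_snoc_intertwining (N : ℕ) (z : Fin s → ℂ) :
    VDM kEnum (Fin.snoc (fun i : Fin N => H i) z) =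
      (∏ j, ∏ i ∈ range (kEnum N j), (z j - η j i)) * VDM kEnum (fun i : Fin N => H i) := by
  obtain ⟨c, hc1, hexpand⟩ := exists_prod_prod_sub_eq_sum_range hbij hmono N η
  set P : Fin (N + 1) → Fin s → ℂ := Fin.snoc (fun i : Fin N => H i) z
  set M := Matrix.of fun i n : Fin (N + 1) => ∏ t, P n t ^ kEnum i t
  have hrow : ∑ k : Fin (N + 1), c k • M k =
      fun n => ∏ j, ∏ i ∈ range (kEnum N j), (P n j - η j i) := by
    funext n
    simp [M, hexpand, Fin.sum_univ_eq_sum_range (fun m => c m * ∏ t, P n t ^ kEnum m t)]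
  refine (Matrix.det_eq_mul_det_submatrix_castSucc M (fun k => c k) hc1 fun m => ?_).trans ?_
  · obtain ⟨j, hj⟩ := exists_lt_of_gradedLex hmono m.isLt
    rw [hrow]
    refine prod_eq_zero (mem_univ j) (prod_eq_zero (mem_range.2 hj) ?_)
    simp [P, hH]
  · rw [hrow, VDM]
    congr 2
    · simp [P]
    · ext i n
      simp [P, M]

theorem norm_VDM_snoc_intertwining (N : ℕ) (z : Fin s → ℂ) :
    ‖VDM kEnum (Fin.snoc (fun i : Fin N => H i) z)‖ =
      (∏ j, ∏ i ∈ range (kEnum N j), ‖z j - η j i‖) * ‖VDM kEnum (fun i : Fin N => H i)‖ := by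
  simp only [VDM_snoc_intertwining hbij hmono hH, norm_mul, norm_prod]

theorem VDM_intertwining_ne_zero (hdist : ∀ j, Function.Injective (η j)) (N : ℕ) :
    VDM kEnum (fun i : Fin N => H i) ≠ 0 := by
  induction N with
  | zero => simp [VDM]
  | succ N ih =>
    have hsnoc : (fun i : Fin (N + 1) => H i) = Fin.snoc (fun i : Fin N => H i) (H N) := by
      ext i : 1
      refine Fin.lastCases ?_ (fun i => ?_) i <;> simp
    rw [hsnoc, VDM_snoc_intertwining hbij hmono hH]
    refine mul_ne_zero (prod_ne_zero_iff.2 fun j _ => prod_ne_zero_iff.2 fun i hi => ?_) ih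
    rw [hH, sub_ne_zero]
    exact (hdist j).ne (mem_range.1 hi).ne'

theorem isLejaSeq1_of_isLejaSeqMulti (hdist : ∀ j, Function.Injective (η j))
    {K : Fin s → Set ℂ} (hmem : ∀ j i, η j i ∈ K j) (hbd : ∀ j, η j 0 ∈ frontier (K j))
    (hL : IsLejaSeqMulti kEnum {z | ∀ j, z j ∈ K j} H) (j : Fin s) :
    IsLejaSeq1 (K j) (η j) := by
  refine ⟨hmem j, hbd j, fun k hk => ⟨⟨η j k, hmem j k, rfl⟩, ?_⟩⟩
  rintro _ ⟨x, hx, rfl⟩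
  obtain ⟨N, hN⟩ := hbij.2 (Pi.single j k)
  have hN1 : 1 ≤ N := by
    refine Nat.one_le_iff_ne_zero.2 fun hN0 => ?_
    have : 0 = k := by simpa [hN0, enum_zero_of_gradedLex hbij hmono] using congrFun hN j
    omega
  set z := Function.update (fun t => η t 0) j x
  have hz : z ∈ {z | ∀ t, z t ∈ K t} := fun t => by
    rcases eq_or_ne t j with rfl | ht
    · simpa [z] using hx
    · simpa [z, ht] using hmem t 0
  have hprod (w : Fin s → ℂ) :
      ∏ t, ∏ i ∈ range (kEnum N t), ‖w t - η t i‖ = ∏ i ∈ range k, ‖w j - η j i‖ := by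
    rw [hN, Fintype.prod_eq_single j fun t ht => by simp [ht]]
    simp
  have hle := (hL.2.2 N hN1).2 ⟨z, hz, rfl⟩
  dsimp only at hle ⊢
  rw [norm_VDM_snoc_intertwining hbij hmono hH, norm_VDM_snoc_intertwining hbij hmono hH,
    hprod, hprod] at hle
  simp only [z, Function.update_self, hH, hN, Pi.single_eq_same] at hle
  exact le_of_mul_le_mul_right hle
    (norm_pos_iff.2 (VDM_intertwining_ne_zero hbij hmono hH hdist N))

theorem isLejaSeqMulti_of_forall_isLejaSeq1 [NeZero s] {K : Fin s → Set ℂ}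
    (hL : ∀ j, IsLejaSeq1 (K j) (η j)) : IsLejaSeqMulti kEnum {z | ∀ j, z j ∈ K j} H := by
  have hHmem (n : ℕ) : H n ∈ {z | ∀ j, z j ∈ K j} := fun j => hH n j ▸ (hL j).1 _
  refine ⟨hHmem, ?_, fun N _ => ⟨⟨H N, hHmem N, rfl⟩, ?_⟩⟩
  · have hH0 (j : Fin s) : H 0 j = η j 0 := by simp [hH, enum_zero_of_gradedLex hbij hmono]
    have hpi : {z : Fin s → ℂ | ∀ j, z j ∈ K j} = Set.univ.pi K := by ext; simp
    rw [hpi]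
    exact mem_frontier_univ_pi (fun j => hH0 j ▸ (hL j).2.1.1) (i := 0) (hH0 0 ▸ (hL 0).2.1)
  · rintro _ ⟨z, hz, rfl⟩
    dsimp only
    rw [norm_VDM_snoc_intertwining hbij hmono hH, norm_VDM_snoc_intertwining hbij hmono hH]
    refine mul_le_mul_of_nonneg_right (prod_le_prod (fun j _ => by positivity) fun j _ => ?_)
      (norm_nonneg _)
    rcases Nat.eq_zero_or_pos (kEnum N j) with h0 | hpos
    · simp [h0]
    · rw [hH]
      exact ((hL j).2.2 _ hpos).2 ⟨z j, hz j, rfl⟩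

end Intertwining

theorem statement4_general {s : ℕ} (hs : 2 ≤ s)
    (kEnum : ℕ → Fin s → ℕ) (hbij : Function.Bijective kEnum)
    (hmono : ∀ a b : ℕ, a < b → GradedLexLt (kEnum a) (kEnum b))
    (K : Fin s → Set ℂ)
    (η : Fin s → ℕ → ℂ) (hdist : ∀ j, Function.Injective (η j))
    (hmem : ∀ j i, η j i ∈ K j) (hbd : ∀ j, η j 0 ∈ frontier (K j))
    (H : ℕ → Fin s → ℂ) (hH : ∀ n j, H n j = η j (kEnum n j)) :
    IsLejaSeqMulti kEnum {z : Fin s → ℂ | ∀ j, z j ∈ K j} H ↔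
      ∀ j : Fin s, IsLejaSeq1 (K j) (η j) := by
  have : NeZero s := ⟨by omega⟩
  exact ⟨isLejaSeq1_of_isLejaSeqMulti hbij hmono hH hdist hmem hbd,
    isLejaSeqMulti_of_forall_isLejaSeq1 hbij hmono hH⟩

/-- the intertwining sequence of sequences `(η^{(j)}_i)_i ⊂ K_j`
(pairwise distinct, starting on `∂K_j`) is a Leja sequence for `K_1 × ⋯ × K_s`
iff each `(η^{(j)}_i)_i` is a Leja sequence for `K_j`. -/
theorem statement4 {s : ℕ} (hs : 2 ≤ s)
    (kEnum : ℕ → Fin s → ℕ) (hbij : Function.Bijective kEnum)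
    (hmono : ∀ a b : ℕ, a < b → GradedLexLt (kEnum a) (kEnum b))
    (K : Fin s → Set ℂ) (hK : ∀ j, IsCompact (K j))
    (η : Fin s → ℕ → ℂ) (hdist : ∀ j, Function.Injective (η j))
    (hmem : ∀ j i, η j i ∈ K j) (hbd : ∀ j, η j 0 ∈ frontier (K j))
    (H : ℕ → Fin s → ℂ) (hH : ∀ n j, H n j = η j (kEnum n j)) :
    IsLejaSeqMulti kEnum {z : Fin s → ℂ | ∀ j, z j ∈ K j} H ↔
      ∀ j : Fin s, IsLejaSeq1 (K j) (η j) :=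
  statement4_general hs kEnum hbij hmono K η hdist hmem hbd H hH
end

section
/- Let (η_i)_{i≥0} and (θ_j)_{j≥0} be two sequences of pairwise distinct complex numbers and let (H_n)_{n≥1} be their intertwining sequence in ℂ². Then for every d ≥ 0, VDM(H_1,…,H_{N_d}) = VDM((η_0,θ_0),(η_0,θ_1),(η_1,θ_0),…,(η_{d−1},θ_0),(η_0,θ_d),…,(η_d,θ_0)) = ∏_{j=1}^{d} [VDM(η_0,…,η_j) × VDM(θ_0,…,θ_j)], where VDM(η_0,…,η_j) = ∏_{0 ≤ i < i' ≤ j} (η_{i'} − η_i) is the one-dimensional Vandermonde determinant (the Schiffer–Siciak formula). -/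
open Finset

/-- Graded lexicographic strict order on `ℕ²`. -/
def GradedLexLt2 (k l : ℕ × ℕ) : Prop :=
  k.1 + k.2 < l.1 + l.2 ∨
    (k.1 + k.2 = l.1 + l.2 ∧ (k.1 < l.1 ∨ (k.1 = l.1 ∧ k.2 < l.2)))

/-- Generalized bidimensional Vandermonde determinant `det [e_i(G_j)]`, where
`e_n(z,w) = z^{k(n)} w^{l(n)}` with `(k(n), l(n)) = kEnum n`. -/
noncomputable def VDM2 (kEnum : ℕ → ℕ × ℕ) {N : ℕ} (G : Fin N → ℂ × ℂ) : ℂ :=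
  Matrix.det (Matrix.of fun i j : Fin N =>
    (G j).1 ^ (kEnum (i : ℕ)).1 * (G j).2 ^ (kEnum (i : ℕ)).2)

/-!
Replace the monomials `z^k w^l` by the Newton products `ω_k(z) ω'_l(w)`, where
`ω_k = ∏_{t<k} (X - η_t)` and `ω'_l = ∏_{t<l} (X - θ_t)`. The exponents `(k(n), l(n))` form a lower
set of `ℕ²` listed along a linear extension of the product order, so this change of basis is
unitriangular and leaves the determinant unchanged. The new matrix
`[ω_{k_i}(η_{k_j}) ω'_{l_i}(θ_{l_j})]` is triangular, since `ω_k` vanishes at `η_0, …, η_{k-1}`,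
and its diagonal, grouped along the antidiagonals `k + l = n`, is the product of the
one-dimensional Vandermonde determinants.
-/

theorem GradedLexLt2.add_le {p q : ℕ × ℕ} (h : GradedLexLt2 p q) : p.1 + p.2 ≤ q.1 + q.2 := by
  unfold GradedLexLt2 at h
  omega

theorem GradedLexLt2.not_le {p q : ℕ × ℕ} (h : GradedLexLt2 p q) : ¬q ≤ p := by
  rw [Prod.mk_le_mk]
  unfold GradedLexLt2 at h
  omega

namespace SchifferSiciak

open Polynomial Lagrange

variable {R : Type*} [CommRing R] {ι : Type*}

theorem sum_coeff_mul_coeff_mul_pow_eq_eval_mul_eval [Fintype ι] (κ : ι → ℕ × ℕ)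
    (hκ : Function.Injective κ) (hlower : IsLowerSet (Set.range κ)) {f g : R[X]}
    (hfg : (f.natDegree, g.natDegree) ∈ Set.range κ) (x y : R) :
    ∑ i, f.coeff (κ i).1 * g.coeff (κ i).2 * (x ^ (κ i).1 * y ^ (κ i).2) =
      f.eval x * g.eval y := by
  classical
  set F : ℕ × ℕ → R := fun p => f.coeff p.1 * g.coeff p.2 * (x ^ p.1 * y ^ p.2)
  have hbox : range (f.natDegree + 1) ×ˢ range (g.natDegree + 1) ⊆ univ.image κ := by
    intro p hp
    simp only [mem_product, mem_range, Nat.lt_succ_iff] at hp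
    obtain ⟨i, hi⟩ := hlower (Prod.mk_le_mk.2 hp) hfg
    exact mem_image.2 ⟨i, mem_univ _, hi⟩
  have hout : ∀ p ∈ univ.image κ,
      p ∉ range (f.natDegree + 1) ×ˢ range (g.natDegree + 1) → F p = 0 := by
    intro p _ hp
    simp only [mem_product, mem_range, not_and_or, not_lt, Nat.succ_le_iff] at hp
    rcases hp with h | h <;> simp [F, coeff_eq_zero_of_natDegree_lt h]
  calc ∑ i, F (κ i) = ∑ p ∈ univ.image κ, F p := (sum_image hκ.injOn).symm
    _ = ∑ p ∈ range (f.natDegree + 1) ×ˢ range (g.natDegree + 1), F p :=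
      (sum_subset hbox hout).symm
    _ = f.eval x * g.eval y := by
      rw [eval_eq_sum_range, eval_eq_sum_range, sum_mul_sum, sum_product]
      exact sum_congr rfl fun a _ => sum_congr rfl fun b _ => by ring

theorem fst_lt_or_snd_lt_of_lt [LinearOrder ι] {κ : ι → ℕ × ℕ} (hκ : ∀ i j, κ i ≤ κ j → i ≤ j)
    {i j : ι} (h : i < j) : (κ i).1 < (κ j).1 ∨ (κ i).2 < (κ j).2 := by
  by_contra! hle
  exact h.not_ge (hκ j i (Prod.mk_le_mk.2 hle))

theorem det_monomial_eq_prod [Fintype ι] [LinearOrder ι] [Nontrivial R] (κ : ι → ℕ × ℕ)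
    (hκ : ∀ i j, κ i ≤ κ j → i ≤ j) (hlower : IsLowerSet (Set.range κ)) (x y : ℕ → R) :
    (Matrix.of fun i j => x (κ j).1 ^ (κ i).1 * y (κ j).2 ^ (κ i).2).det =
      ∏ i, (∏ t ∈ range (κ i).1, (x (κ i).1 - x t)) * ∏ t ∈ range (κ i).2, (y (κ i).2 - y t) := by
  set A : Matrix ι ι R := .of fun i j => x (κ j).1 ^ (κ i).1 * y (κ j).2 ^ (κ i).2 with hA
  set P : ι → R[X] := fun i => nodal (range (κ i).1) x with hP
  set Q : ι → R[X] := fun i => nodal (range (κ i).2) y with hQ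
  have hdegP (i : ι) : (P i).natDegree = (κ i).1 := by simp [hP, natDegree_nodal]
  have hdegQ (i : ι) : (Q i).natDegree = (κ i).2 := by simp [hQ, natDegree_nodal]
  set T : Matrix ι ι R := .of fun i i' => (P i).coeff (κ i').1 * (Q i).coeff (κ i').2 with hT
  set C : Matrix ι ι R := .of fun i j => (P i).eval (x (κ j).1) * (Q i).eval (y (κ j).2) with hC
  have hT_tri : T.BlockTriangular OrderDual.toDual := by
    intro i i' (h : i < i')
    rcases fst_lt_or_snd_lt_of_lt hκ h with h | h
    · simp [hT, coeff_eq_zero_of_natDegree_lt ((hdegP i).trans_lt h)]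
    · simp [hT, coeff_eq_zero_of_natDegree_lt ((hdegQ i).trans_lt h)]
  have hC_tri : C.BlockTriangular id := by
    intro i j (h : j < i)
    rcases fst_lt_or_snd_lt_of_lt hκ h with h | h
    · simp [hC, hP, eval_nodal_at_node (mem_range.2 h)]
    · simp [hC, hQ, eval_nodal_at_node (mem_range.2 h)]
  have hTA : T * A = C := by
    ext i j
    rw [Matrix.mul_apply, hC, Matrix.of_apply, ← sum_coeff_mul_coeff_mul_pow_eq_eval_mul_eval κ
      (fun i j h => le_antisymm (hκ i j h.le) (hκ j i h.ge)) hlower (f := P i) (g := Q i)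
      (by rw [hdegP, hdegQ]; exact ⟨i, rfl⟩)]
    simp [hT, hA, mul_assoc]
  have hdetT : T.det = 1 := by
    rw [Matrix.det_of_isLowerTriangular T hT_tri]
    refine prod_eq_one fun i _ => ?_
    have hPi : (P i).coeff (κ i).1 = 1 := by rw [← hdegP i]; exact nodal_monic.coeff_natDegree
    have hQi : (Q i).coeff (κ i).2 = 1 := by rw [← hdegQ i]; exact nodal_monic.coeff_natDegree
    simp [hT, hPi, hQi]
  calc A.det = T.det * A.det := by rw [hdetT, one_mul]
    _ = ∏ i, C i i := by rw [← Matrix.det_mul, hTA, Matrix.det_of_isUpperTriangular hC_tri]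
    _ = _ := by simp [hC, hP, hQ, eval_nodal]

def triangle (d : ℕ) : Finset (ℕ × ℕ) :=
  (range (d + 1)).biUnion antidiagonal

theorem mem_triangle {d : ℕ} {p : ℕ × ℕ} : p ∈ triangle d ↔ p.1 + p.2 ≤ d := by
  simp [triangle]

theorem isLowerSet_triangle (d : ℕ) : IsLowerSet (triangle d : Set (ℕ × ℕ)) :=
  fun _ _ hle hp => mem_triangle.2 <| (add_le_add hle.1 hle.2).trans (mem_triangle.1 hp)

theorem pairwiseDisjoint_antidiagonal (s : Finset ℕ) :
    (s : Set ℕ).PairwiseDisjoint antidiagonal := fun _ _ _ _ hmn =>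
  disjoint_left.2 fun _ hm hn => hmn ((mem_antidiagonal.1 hm).symm.trans (mem_antidiagonal.1 hn))

theorem card_triangle (d : ℕ) : #(triangle d) = (d + 1) * (d + 2) / 2 := by
  rw [triangle, card_biUnion (pairwiseDisjoint_antidiagonal _)]
  simp only [Nat.card_antidiagonal]
  have hgauss := sum_range_succ' (fun i => i) (d + 1)
  rw [sum_range_id, add_zero] at hgauss
  rw [← hgauss, Nat.mul_comm]
  rfl

theorem prod_triangle {M : Type*} [CommMonoid M] (u v : ℕ → M) (hu : u 0 = 1) (hv : v 0 = 1)
    (d : ℕ) :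
    ∏ p ∈ triangle d, u p.1 * v p.2 =
      ∏ j ∈ range d, (∏ a ∈ range (j + 2), u a) * ∏ b ∈ range (j + 2), v b := by
  have hdiag (n : ℕ) : ∏ p ∈ antidiagonal n, u p.1 * v p.2 =
      (∏ a ∈ range (n + 1), u a) * ∏ b ∈ range (n + 1), v b := by
    have hswap : ∏ p ∈ antidiagonal n, v p.2 = ∏ p ∈ antidiagonal n, v p.1 :=
      Nat.prod_antidiagonal_swap (f := fun p => v p.1)
    rw [prod_mul_distrib, hswap, Nat.prod_antidiagonal_eq_prod_range_succ_mk,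
      Nat.prod_antidiagonal_eq_prod_range_succ_mk]
  rw [triangle, prod_biUnion (pairwiseDisjoint_antidiagonal _), prod_range_succ']
  simp [hdiag, hu, hv]

theorem image_kEnum_eq_triangle {kEnum : ℕ → ℕ × ℕ} (hbij : Function.Bijective kEnum)
    (hmono : ∀ a b : ℕ, a < b → GradedLexLt2 (kEnum a) (kEnum b)) (d : ℕ) :
    univ.image (fun i : Fin ((d + 1) * (d + 2) / 2) => kEnum i) = triangle d := by
  have hsub : univ.image (fun i : Fin ((d + 1) * (d + 2) / 2) => kEnum i) ⊆ triangle d := by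
    simp only [subset_iff, mem_image, mem_univ, true_and, forall_exists_index,
      forall_apply_eq_imp_iff]
    intro i
    by_contra hi
    -- degrees never decrease along `kEnum`, so all of `triangle d` would be listed before `i`
    have hcover : triangle d ⊆ (range i).image kEnum := by
      intro p hp
      obtain ⟨n, rfl⟩ := hbij.2 p
      refine mem_image_of_mem _ (mem_range.2 (not_le.1 fun hin => hi ?_))
      rcases hin.eq_or_lt with h | h
      · exact h ▸ hp
      · exact mem_triangle.2 ((hmono _ _ h).add_le.trans (mem_triangle.1 hp))
    have := (card_le_card hcover).trans card_image_le
    rw [card_triangle, card_range] at this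
    exact absurd i.isLt (not_lt.2 this)
  refine eq_of_subset_of_card_le hsub ?_
  rw [card_triangle, card_image_of_injective _ fun i j h => Fin.val_injective (hbij.1 h), card_univ,
    Fintype.card_fin]

end SchifferSiciak

open SchifferSiciak

-- `kEnum n` stands for the paper's `k(n+1)` and `H n` for `H_{n+1}`.
theorem statement6_general
    (kEnum : ℕ → ℕ × ℕ) (hbij : Function.Bijective kEnum)
    (hmono : ∀ a b : ℕ, a < b → GradedLexLt2 (kEnum a) (kEnum b))
    (η θ : ℕ → ℂ)
    (H : ℕ → ℂ × ℂ) (hH : ∀ n, H n = (η (kEnum n).1, θ (kEnum n).2)) :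
    ∀ d : ℕ,
      VDM2 kEnum (fun i : Fin ((d + 1) * (d + 2) / 2) => H i) =
        ∏ j ∈ range d,
          ((∏ p ∈ range (j + 2), ∏ i ∈ range p, (η p - η i)) *
            (∏ p ∈ range (j + 2), ∏ i ∈ range p, (θ p - θ i))) := by
  intro d
  set κ : Fin ((d + 1) * (d + 2) / 2) → ℕ × ℕ := fun i => kEnum i
  have hκ : ∀ i j, κ i ≤ κ j → i ≤ j := fun i j hij =>
    not_lt.1 fun hji => (hmono _ _ hji).not_le hij
  have hrange : Set.range κ = triangle d := by
    rw [← image_kEnum_eq_triangle hbij hmono d, coe_image, coe_univ, Set.image_univ]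
  calc VDM2 kEnum (fun i : Fin ((d + 1) * (d + 2) / 2) => H i)
      = (Matrix.of fun i j => η (κ j).1 ^ (κ i).1 * θ (κ j).2 ^ (κ i).2).det := by
        simp [VDM2, hH, κ]
    _ = ∏ i, (∏ t ∈ range (κ i).1, (η (κ i).1 - η t)) *
          ∏ t ∈ range (κ i).2, (θ (κ i).2 - θ t) :=
        det_monomial_eq_prod κ hκ (by rw [hrange]; exact isLowerSet_triangle d) η θ
    _ = ∏ p ∈ triangle d, (∏ t ∈ range p.1, (η p.1 - η t)) *
          ∏ t ∈ range p.2, (θ p.2 - θ t) := by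
        rw [← image_kEnum_eq_triangle hbij hmono d,
          prod_image fun i _ j _ h => Fin.val_injective (hbij.1 h)]
    _ = _ := prod_triangle (fun p => ∏ t ∈ range p, (η p - η t))
        (fun p => ∏ t ∈ range p, (θ p - θ t)) (prod_range_zero _) (prod_range_zero _) d

/-- Schiffer–Siciak formula: for the intertwining sequence of two
pairwise distinct sequences, `VDM(H_1,…,H_{N_d}) = ∏_{j=1}^{d} [VDM(η_0,…,η_j) ×
VDM(θ_0,…,θ_j)]`, where `VDM(η_0,…,η_j) = ∏_{0 ≤ i < i' ≤ j} (η_{i'} − η_i)`.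
Here `kEnum n` stands for the paper's `k(n+1)` and `H n` for `H_{n+1}`. -/
theorem statement6
    (kEnum : ℕ → ℕ × ℕ) (hbij : Function.Bijective kEnum)
    (hmono : ∀ a b : ℕ, a < b → GradedLexLt2 (kEnum a) (kEnum b))
    (η θ : ℕ → ℂ) (hη : Function.Injective η) (hθ : Function.Injective θ)
    (H : ℕ → ℂ × ℂ) (hH : ∀ n, H n = (η (kEnum n).1, θ (kEnum n).2)) :
    ∀ d : ℕ,
      VDM2 kEnum (fun i : Fin ((d + 1) * (d + 2) / 2) => H i) =
        ∏ j ∈ range d,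
          ((∏ p ∈ range (j + 2), ∏ i ∈ range p, (η p - η i)) *
            (∏ p ∈ range (j + 2), ∏ i ∈ range p, (θ p - θ i))) :=
  statement6_general kEnum hbij hmono η θ H hH
end

section
/- There exists a Leja sequence (H_n)_{n≥1} for the closed unit bidisc D̄² ⊂ ℂ² that cannot be written as the intertwining sequence of any two complex sequences; moreover, neither of its two coordinate sequences is a Leja sequence for the closed unit disk. In fact, any Leja sequence for D̄² beginning with H_1 = (1,1), H_2 = (−1,−1), H_3 = (e^{iπ/4}, −e^{iπ/4}) has these properties. -/
open Finset

/-- A Leja sequence for a compact set `K ⊂ ℂ²`; `G n` is the paper's `H_{n+1}`. -/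
def IsLejaSeq2 (kEnum : ℕ → ℕ × ℕ) (K : Set (ℂ × ℂ)) (G : ℕ → ℂ × ℂ) : Prop :=
  (∀ n, G n ∈ K) ∧ G 0 ∈ frontier K ∧
    ∀ N : ℕ, 1 ≤ N →
      IsGreatest
        ((fun z => ‖VDM2 kEnum (Fin.snoc (fun i : Fin N => G i) z)‖) '' K)
        ‖VDM2 kEnum (Fin.snoc (fun i : Fin N => G i) (G N))‖

/-- A (one-dimensional) Leja sequence for the closed unit disk. -/
def IsLejaDisk (η : ℕ → ℂ) : Prop :=
  (∀ n, ‖η n‖ ≤ 1) ∧ ‖η 0‖ = 1 ∧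
    ∀ k : ℕ, 1 ≤ k →
      IsGreatest
        ((fun z => ∏ i ∈ range k, ‖z - η i‖) '' {z : ℂ | ‖z‖ ≤ 1})
        (∏ i ∈ range k, ‖η k - η i‖)

/-- The closed unit bidisc. -/
def Bidisc : Set (ℂ × ℂ) := {p | ‖p.1‖ ≤ 1 ∧ ‖p.2‖ ≤ 1}

/-! The enumeration begins with the monomials `1, w, z`. With `H₁ = (1,1)` the first free
Vandermonde determinant is `w - 1`, and with `H₂ = (-1,-1)` the second one is `2 (w - z)`;
on the bidisc these are maximised by `w = -1` and by every antipodal pair `(u, -u)`,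
`‖u‖ = 1`, so the prescribed start is Leja and continues greedily by compactness.
Since `H₁` and `H₂` have the same `z`-exponent `0` but different first coordinates, the
sequence is not intertwining. A Leja sequence for the disk starting `1, -1` must continue
with `η₂ = ±i`, i.e. `|η₂² - 1| = 2`, whereas both coordinates of `H₃` square to `i`. -/

theorem exists_seq_eq_of_history {X : Type*} (next : ∀ n, (Fin n → X) → X) :
    ∃ G : ℕ → X, ∀ n, G n = next n fun i => G i :=
  ⟨Nat.strongRec fun n G => next n fun i => G i i.2, Nat.strongRec_eq _⟩

theorem exists_seq_extending_of_forall_exists {X : Type*} (P : ∀ N, (Fin N → X) → X → Prop)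
    (hP : ∀ N v, ∃ p, P N v p) {n₀ : ℕ} (g : Fin n₀ → X) :
    ∃ G : ℕ → X, (∀ i : Fin n₀, G i = g i) ∧
      ∀ N, n₀ ≤ N → P N (fun i => G i) (G N) := by
  choose next hnext using hP
  obtain ⟨G, hG⟩ :=
    exists_seq_eq_of_history fun N v => if h : N < n₀ then g ⟨N, h⟩ else next N v
  refine ⟨G, fun i => by rw [hG, dif_pos i.2], fun N hN => ?_⟩
  rw [hG N, dif_neg (not_lt.2 hN)]
  exact hnext _ _

theorem IsMaxOn.isGreatest_image {α β : Type*} [Preorder β] {f : α → β} {s : Set α} {a : α}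
    (h : IsMaxOn f s a) (ha : a ∈ s) : IsGreatest (f '' s) (f a) :=
  ⟨Set.mem_image_of_mem f ha, Set.forall_mem_image.2 fun _ hx => isMaxOn_iff.1 h _ hx⟩

section Enumeration

variable {kEnum : ℕ → ℕ × ℕ} (hsurj : Function.Surjective kEnum)
  (hmono : ∀ a b : ℕ, a < b → GradedLexLt2 (kEnum a) (kEnum b))
include hsurj hmono

theorem kEnum_zero : kEnum 0 = (0, 0) := by
  obtain ⟨m, hm⟩ := hsurj (0, 0)
  rcases Nat.eq_zero_or_pos m with rfl | hm0
  · exact hm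
  · have := hmono 0 m hm0
    rw [hm] at this
    unfold GradedLexLt2 at this
    omega

theorem kEnum_succ_of_covBy {n : ℕ} {p : ℕ × ℕ} (hlt : GradedLexLt2 (kEnum n) p)
    (hcov : ∀ x, GradedLexLt2 (kEnum n) x → ¬ GradedLexLt2 x p) : kEnum (n + 1) = p := by
  obtain ⟨m, rfl⟩ := hsurj p
  rcases lt_trichotomy m (n + 1) with hm | rfl | hm
  · have hle := hmono m n
    unfold GradedLexLt2 at hlt hle
    rcases (Nat.lt_succ_iff.1 hm).lt_or_eq with hm | rfl <;> grind
  · rfl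
  · exact absurd (hmono (n + 1) m hm) (hcov _ (hmono n (n + 1) n.lt_succ_self))

theorem kEnum_one : kEnum 1 = (0, 1) :=
  kEnum_succ_of_covBy hsurj hmono (by simp [kEnum_zero hsurj hmono, GradedLexLt2])
    (by rw [kEnum_zero hsurj hmono]; unfold GradedLexLt2; omega)

theorem kEnum_two : kEnum 2 = (1, 0) :=
  kEnum_succ_of_covBy hsurj hmono (by simp [kEnum_one hsurj hmono, GradedLexLt2])
    (by rw [kEnum_one hsurj hmono]; unfold GradedLexLt2; omega)

end Enumeration

theorem not_intertwining_of_fst_ne {kEnum : ℕ → ℕ × ℕ} {G : ℕ → ℂ × ℂ} {a b : ℕ}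
    (hab : (kEnum a).1 = (kEnum b).1) (hG : (G a).1 ≠ (G b).1) :
    ¬ ∃ η θ : ℕ → ℂ, ∀ n, G n = (η (kEnum n).1, θ (kEnum n).2) := by
  rintro ⟨η, θ, h⟩
  exact hG (by rw [h a, h b, hab])

theorem prod_range_two_norm_sub {η : ℕ → ℂ} (h0 : η 0 = 1) (h1 : η 1 = -1) (z : ℂ) :
    ∏ i ∈ range 2, ‖z - η i‖ = ‖z ^ 2 - 1‖ := by
  rw [prod_range_succ, prod_range_one, h0, h1, ← norm_mul]
  ring_nf

theorem not_isLejaDisk_of_norm_sq_sub_one_lt {η : ℕ → ℂ} (h0 : η 0 = 1) (h1 : η 1 = -1)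
    (h2 : ‖η 2 ^ 2 - 1‖ < 2) : ¬ IsLejaDisk η := by
  rintro ⟨-, -, hmax⟩
  have hI := (hmax 2 one_le_two).2 ⟨Complex.I, by simp, rfl⟩
  simp only [prod_range_two_norm_sub h0 h1, Complex.I_sq] at hI
  norm_num at hI
  linarith

theorem norm_I_sub_one_lt_two : ‖Complex.I - 1‖ < 2 := by
  rw [← sq_lt_sq₀ (norm_nonneg _) zero_le_two, Complex.sq_norm, Complex.normSq_apply]
  norm_num

theorem not_intertwining_and_not_isLejaDisk_of_start {kEnum : ℕ → ℕ × ℕ}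
    (hk : (kEnum 0).1 = (kEnum 1).1) {G : ℕ → ℂ × ℂ} {u : ℂ} (hu : u ^ 2 = Complex.I)
    (hG0 : G 0 = (1, 1)) (hG1 : G 1 = (-1, -1)) (hG2 : G 2 = (u, -u)) :
    (¬ ∃ η θ : ℕ → ℂ, ∀ n, G n = (η (kEnum n).1, θ (kEnum n).2)) ∧
      ¬ IsLejaDisk (fun n => (G n).1) ∧ ¬ IsLejaDisk (fun n => (G n).2) := by
  have hcoord (η : ℕ → ℂ) (hη0 : η 0 = 1) (hη1 : η 1 = -1)
      (hη2 : η 2 ^ 2 = Complex.I) : ¬ IsLejaDisk η :=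
    not_isLejaDisk_of_norm_sq_sub_one_lt hη0 hη1 (hη2 ▸ norm_I_sub_one_lt_two)
  exact ⟨not_intertwining_of_fst_ne hk (by norm_num [hG0, hG1]),
    hcoord _ (by simp [hG0]) (by simp [hG1]) (by simp [hG2, hu]),
    hcoord _ (by simp [hG0]) (by simp [hG1]) (by simp [hG2, hu])⟩

theorem exp_pi_mul_I_div_four_sq :
    Complex.exp ((Real.pi : ℂ) * Complex.I / 4) ^ 2 = Complex.I := by
  rw [← Complex.exp_nat_mul]
  convert Complex.exp_pi_div_two_mul_I using 2
  push_cast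
  ring

theorem norm_exp_pi_mul_I_div_four : ‖Complex.exp ((Real.pi : ℂ) * Complex.I / 4)‖ = 1 := by
  simp [Complex.norm_exp]

theorem bidisc_eq_closedBall : Bidisc = Metric.closedBall 0 1 := by
  ext p
  simp [Bidisc, Prod.norm_def]

theorem isCompact_bidisc : IsCompact Bidisc :=
  bidisc_eq_closedBall ▸ isCompact_closedBall 0 1

theorem exists_isMaxOn_norm_VDM2_snoc (kEnum : ℕ → ℕ × ℕ) {K : Set (ℂ × ℂ)}
    (hK : IsCompact K) (hne : K.Nonempty) {N : ℕ} (v : Fin N → ℂ × ℂ) :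
    ∃ p ∈ K, IsMaxOn (fun z => ‖VDM2 kEnum (Fin.snoc v z)‖) K p := by
  refine hK.exists_isMaxOn hne (Continuous.continuousOn ?_)
  unfold VDM2
  fun_prop

section Vandermonde

variable {kEnum : ℕ → ℕ × ℕ} (h0 : kEnum 0 = (0, 0)) (h1 : kEnum 1 = (0, 1))
include h0 h1

theorem VDM2_fin_two (p q : ℂ × ℂ) : VDM2 kEnum ![p, q] = q.2 - p.2 := by
  simp [VDM2, Matrix.det_fin_two, h0, h1]

theorem VDM2_fin_three (h2 : kEnum 2 = (1, 0)) (p q r : ℂ × ℂ) :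
    VDM2 kEnum ![p, q, r] = (q.2 - p.2) * (r.1 - p.1) - (r.2 - p.2) * (q.1 - p.1) := by
  simp [VDM2, Matrix.det_fin_three, h0, h1, h2]
  ring

theorem isMaxOn_norm_VDM2_two (a : ℂ) :
    IsMaxOn (fun z => ‖VDM2 kEnum ![(1, 1), z]‖) Bidisc (a, -1) := by
  intro z hz
  have hz2 : ‖z.2‖ ≤ 1 := hz.2
  simp only [VDM2_fin_two h0 h1]
  norm_num
  exact (norm_sub_le _ _).trans (by simp; linarith)

theorem isMaxOn_norm_VDM2_three (h2 : kEnum 2 = (1, 0)) {u : ℂ} (hu : ‖u‖ = 1) :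
    IsMaxOn (fun z => ‖VDM2 kEnum ![(1, 1), (-1, -1), z]‖) Bidisc (u, -u) := by
  intro z hz
  have hz1 : ‖z.1‖ ≤ 1 := hz.1
  have hz2 : ‖z.2‖ ≤ 1 := hz.2
  have hVDM (w : ℂ × ℂ) : VDM2 kEnum ![(1, 1), (-1, -1), w] = 2 * (w.2 - w.1) := by
    rw [VDM2_fin_three h0 h1 h2]
    ring
  simp only [hVDM, norm_mul, show -u - u = -(2 * u) by ring, norm_neg, hu]
  norm_num
  linarith [norm_sub_le z.2 z.1]

theorem isLejaSeq2_bidisc_of_start (h2 : kEnum 2 = (1, 0)) {G : ℕ → ℂ × ℂ} {u : ℂ}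
    (hu : ‖u‖ = 1) (hG0 : G 0 = (1, 1)) (hG1 : G 1 = (-1, -1)) (hG2 : G 2 = (u, -u))
    (hG : ∀ N, 3 ≤ N → G N ∈ Bidisc ∧
      IsMaxOn (fun z => ‖VDM2 kEnum (Fin.snoc (fun i : Fin N => G i) z)‖) Bidisc (G N)) :
    IsLejaSeq2 kEnum Bidisc G := by
  have hmem (n : ℕ) : G n ∈ Bidisc := by
    rcases lt_or_ge n 3 with hn | hn
    · interval_cases n <;> simp [Bidisc, hG0, hG1, hG2, hu]
    · exact (hG n hn).1
  refine ⟨hmem, ?_, fun N hN => (?_ : IsMaxOn _ _ _).isGreatest_image (hmem N)⟩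
  · rw [hG0, bidisc_eq_closedBall, frontier_closedBall _ one_ne_zero]
    simp [Prod.norm_def]
  rcases (show N = 1 ∨ N = 2 ∨ 3 ≤ N by omega) with rfl | rfl | hN
  · have hsnoc (z : ℂ × ℂ) : Fin.snoc (fun i : Fin 1 => G i) z = ![(1, 1), z] := by
      funext i
      fin_cases i
      exacts [hG0, rfl]
    simpa only [hsnoc, hG1] using isMaxOn_norm_VDM2_two h0 h1 (-1)
  · have hsnoc (z : ℂ × ℂ) :
        Fin.snoc (fun i : Fin 2 => G i) z = ![(1, 1), (-1, -1), z] := by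
      funext i
      fin_cases i
      exacts [hG0, hG1, rfl]
    simpa only [hsnoc, hG2] using isMaxOn_norm_VDM2_three h0 h1 h2 hu
  · exact (hG N hN).2

end Vandermonde

/-- there is a Leja sequence for the closed unit bidisc that is not the
intertwining sequence of any two complex sequences, and neither of whose coordinate
sequences is a Leja sequence for the closed unit disk; in fact, any Leja sequence for
`D̄²` beginning with `(1,1), (−1,−1), (e^{iπ/4}, −e^{iπ/4})` has these properties. -/
theorem statement7
    (kEnum : ℕ → ℕ × ℕ) (hbij : Function.Bijective kEnum)
    (hmono : ∀ a b : ℕ, a < b → GradedLexLt2 (kEnum a) (kEnum b)) :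
    (∃ G : ℕ → ℂ × ℂ, IsLejaSeq2 kEnum Bidisc G ∧
      (¬ ∃ η θ : ℕ → ℂ, ∀ n, G n = (η (kEnum n).1, θ (kEnum n).2)) ∧
      ¬ IsLejaDisk (fun n => (G n).1) ∧ ¬ IsLejaDisk (fun n => (G n).2)) ∧
    (∀ G : ℕ → ℂ × ℂ, IsLejaSeq2 kEnum Bidisc G →
      G 0 = (1, 1) → G 1 = (-1, -1) →
      G 2 = (Complex.exp ((Real.pi : ℂ) * Complex.I / 4),
             -Complex.exp ((Real.pi : ℂ) * Complex.I / 4)) →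
      (¬ ∃ η θ : ℕ → ℂ, ∀ n, G n = (η (kEnum n).1, θ (kEnum n).2)) ∧
      ¬ IsLejaDisk (fun n => (G n).1) ∧ ¬ IsLejaDisk (fun n => (G n).2)) := by
  have h0 := kEnum_zero hbij.2 hmono
  have h1 := kEnum_one hbij.2 hmono
  have h2 := kEnum_two hbij.2 hmono
  set ω := Complex.exp ((Real.pi : ℂ) * Complex.I / 4)
  have hstart (G : ℕ → ℂ × ℂ) : G 0 = (1, 1) → G 1 = (-1, -1) → G 2 = (ω, -ω) →
      (¬ ∃ η θ : ℕ → ℂ, ∀ n, G n = (η (kEnum n).1, θ (kEnum n).2)) ∧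
      ¬ IsLejaDisk (fun n => (G n).1) ∧ ¬ IsLejaDisk (fun n => (G n).2) :=
    not_intertwining_and_not_isLejaDisk_of_start (by rw [h0, h1]) exp_pi_mul_I_div_four_sq
  refine ⟨?_, fun G _ => hstart G⟩
  obtain ⟨G, hprefix, hgreedy⟩ := exists_seq_extending_of_forall_exists
    (fun N v p => p ∈ Bidisc ∧ IsMaxOn (fun z => ‖VDM2 kEnum (Fin.snoc v z)‖) Bidisc p)
    (fun N v => exists_isMaxOn_norm_VDM2_snoc kEnum isCompact_bidisc ⟨0, by simp [Bidisc]⟩ v)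
    ![(1, 1), (-1, -1), (ω, -ω)]
  have hG0 : G 0 = (1, 1) := hprefix 0
  have hG1 : G 1 = (-1, -1) := hprefix 1
  have hG2 : G 2 = (ω, -ω) := hprefix 2
  exact ⟨G, isLejaSeq2_bidisc_of_start h0 h1 h2 norm_exp_pi_mul_I_div_four hG0 hG1 hG2 hgreedy,
    hstart G hG0 hG1 hG2⟩
end

section
/- Let (η_i)_{i≥0} and (θ_j)_{j≥0} be sequences of pairwise distinct complex numbers, N ≥ 1 with associated integers d, m, and Ω_N, 𝒫_N as in the bidimensional intertwining setting. Then for every point of Ω_N the FLIP exists, i.e. there is a unique l^{(N)}_{(η_p,θ_q)} ∈ 𝒫_N equal to 1 at (η_p,θ_q) and 0 at every other point of Ω_N. Moreover, if (η_p,θ_q) ∈ Ω_N satisfies p+q = d, or p+q = d−1 and p ≥ m+1, then for all (z,w) ∈ ℂ²: l^{(N)}_{(η_p,θ_q)}(z,w) = ∏_{i=0}^{p−1} (z−η_i)/(η_p−η_i) × ∏_{j=0}^{q−1} (w−θ_j)/(θ_q−θ_j). -/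
open Finset

/-- The index set of both `Ω_N` and the monomials spanning `𝒫_N` in the bidimensional
intertwining setting with parameters `d`, `m`: pairs `(k,l)` with `k+l < d`, or
`k+l = d` and `k ≤ m`. -/
def BidIdx (d m : ℕ) (p : ℕ × ℕ) : Prop :=
  p.1 + p.2 < d ∨ (p.1 + p.2 = d ∧ p.1 ≤ m)

/-- The polynomial space `𝒫_N` (as a space of functions on `ℂ²`): the span of the
monomials `z^k w^l` with `(k,l)` in the index set. -/
noncomputable def PolySpace (d m : ℕ) : Submodule ℂ ((ℂ × ℂ) → ℂ) :=
  Submodule.span ℂ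
    {f | ∃ k l : ℕ, BidIdx d m (k, l) ∧ f = fun p : ℂ × ℂ => p.1 ^ k * p.2 ^ l}

/-- `L` is the fundamental Lagrange interpolation polynomial (FLIP) of the point
`(η_p, θ_q)` of `Ω_N`: it belongs to `𝒫_N`, equals `1` at `(η_p, θ_q)` and `0` at
every other point of `Ω_N`. -/
def IsFLIP (η θ : ℕ → ℂ) (d m : ℕ) (p q : ℕ) (L : (ℂ × ℂ) → ℂ) : Prop :=
  L ∈ PolySpace d m ∧ L (η p, θ q) = 1 ∧
    ∀ k l : ℕ, BidIdx d m (k, l) → (k, l) ≠ (p, q) → L (η k, θ l) = 0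

/-!
The Newton products `∏_{i<p} (z − η_i) ∏_{j<q} (w − θ_j)` with `(p,q) ∈ Ω_N` lie in `𝒫_N` and
vanish at every node `(η_k, θ_l)` with `k < p` or `l < q`. Their values at the nodes are therefore
triangular for the componentwise order, so downward induction on `p + q` shows that evaluation at
the nodes maps `𝒫_N` onto `ℂ^{Ω_N}`. Since `𝒫_N` is spanned by `|Ω_N|` monomials, this map is a
bijection, which gives existence and uniqueness of the FLIPs. If `p + q = d`, or `p + q = d − 1`
and `p > m`, every node other than `(η_p, θ_q)` has `k < p` or `l < q`, so the normalised Newton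
product is itself the FLIP.
-/

open Polynomial

namespace BidIdx

variable {d m : ℕ}

theorem of_le {k l p q : ℕ} (h : BidIdx d m (p, q)) (hk : k ≤ p) (hl : l ≤ q) :
    BidIdx d m (k, l) := by
  unfold BidIdx at *
  omega

theorem add_le {p q : ℕ} (h : BidIdx d m (p, q)) : p + q ≤ d := by
  unfold BidIdx at h
  omega

instance : DecidablePred (BidIdx d m) := fun _ => by
  unfold BidIdx
  infer_instance

end BidIdx

def bidIdxFinset (d m : ℕ) : Finset (ℕ × ℕ) :=
  (range (d + 1) ×ˢ range (d + 1)).filter (BidIdx d m)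

@[simp]
theorem mem_bidIdxFinset {d m : ℕ} {s : ℕ × ℕ} : s ∈ bidIdxFinset d m ↔ BidIdx d m s := by
  simp only [bidIdxFinset, mem_filter, mem_product, mem_range, and_iff_right_iff_imp]
  unfold BidIdx
  omega

theorem polySpace_eq_span_range (d m : ℕ) :
    PolySpace d m = Submodule.span ℂ
      (Set.range fun s : bidIdxFinset d m => fun x : ℂ × ℂ => x.1 ^ s.1.1 * x.2 ^ s.1.2) := by
  unfold PolySpace
  congr 1
  ext f
  simp only [Set.mem_ofPred_eq, Set.mem_range, Subtype.exists, mem_bidIdxFinset, Prod.exists]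
  exact ⟨fun ⟨k, l, h, hf⟩ => ⟨k, l, h, hf.symm⟩, fun ⟨k, l, h, hf⟩ => ⟨k, l, h, hf.symm⟩⟩

instance (d m : ℕ) : FiniteDimensional ℂ (PolySpace d m) := by
  rw [polySpace_eq_span_range]
  exact FiniteDimensional.span_of_finite ℂ (Set.finite_range _)

theorem finrank_polySpace_le (d m : ℕ) :
    Module.finrank ℂ (PolySpace d m) ≤ #(bidIdxFinset d m) := by
  rw [polySpace_eq_span_range, ← Fintype.card_coe]
  exact finrank_range_le_card _

theorem eval_mul_eval_mem_polySpace {d m p q : ℕ} (h : BidIdx d m (p, q)) {P Q : ℂ[X]}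
    (hP : P.natDegree ≤ p) (hQ : Q.natDegree ≤ q) :
    (fun x : ℂ × ℂ => P.eval x.1 * Q.eval x.2) ∈ PolySpace d m := by
  have hsum : (fun x : ℂ × ℂ => P.eval x.1 * Q.eval x.2) =
      ∑ k ∈ range (p + 1), ∑ l ∈ range (q + 1),
        (P.coeff k * Q.coeff l) • fun x : ℂ × ℂ => x.1 ^ k * x.2 ^ l := by
    funext x
    simp only [eval_eq_sum_range' (Nat.lt_succ_of_le hP),
      eval_eq_sum_range' (Nat.lt_succ_of_le hQ), sum_mul_sum, Finset.sum_apply,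
      Pi.smul_apply, smul_eq_mul]
    exact sum_congr rfl fun _ _ => sum_congr rfl fun _ _ => by ring
  rw [hsum]
  refine Submodule.sum_mem _ fun k hk => Submodule.sum_mem _ fun l hl =>
    Submodule.smul_mem _ _ (Submodule.subset_span ⟨k, l, h.of_le ?_ ?_, rfl⟩)
  · exact Nat.lt_succ_iff.1 (mem_range.1 hk)
  · exact Nat.lt_succ_iff.1 (mem_range.1 hl)

section Newton

variable {η θ : ℕ → ℂ}

def newtonProd (η θ : ℕ → ℂ) (p q : ℕ) (x : ℂ × ℂ) : ℂ :=
  (∏ i ∈ range p, (x.1 - η i)) * ∏ j ∈ range q, (x.2 - θ j)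

theorem newtonProd_mem_polySpace {d m p q : ℕ} (h : BidIdx d m (p, q)) :
    newtonProd η θ p q ∈ PolySpace d m := by
  have hP := natDegree_finsetProd_X_sub_C_eq_card (range p) η
  have hQ := natDegree_finsetProd_X_sub_C_eq_card (range q) θ
  rw [card_range] at hP hQ
  convert eval_mul_eval_mem_polySpace h hP.le hQ.le using 1
  funext x
  simp [newtonProd, eval_prod]

theorem newtonProd_apply_self_ne_zero (hη : Function.Injective η)
    (hθ : Function.Injective θ) (p q : ℕ) : newtonProd η θ p q (η p, θ q) ≠ 0 := by
  refine mul_ne_zero (prod_ne_zero_iff.2 fun i hi => sub_ne_zero.2 fun h => ?_)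
    (prod_ne_zero_iff.2 fun j hj => sub_ne_zero.2 fun h => ?_)
  · exact (mem_range.1 hi).ne' (hη h)
  · exact (mem_range.1 hj).ne' (hθ h)

theorem newtonProd_apply_eq_zero {p q k l : ℕ} (h : k < p ∨ l < q) :
    newtonProd η θ p q (η k, θ l) = 0 := by
  rcases h with h | h
  · exact mul_eq_zero_of_left (prod_eq_zero (mem_range.2 h) (sub_self _)) _
  · exact mul_eq_zero_of_right _ (prod_eq_zero (mem_range.2 h) (sub_self _))

end Newton

section NodeEval

variable {η θ : ℕ → ℂ} {d m : ℕ}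

def nodeEval (η θ : ℕ → ℂ) (d m : ℕ) : PolySpace d m →ₗ[ℂ] (bidIdxFinset d m → ℂ) where
  toFun f s := f.1 (η s.1.1, θ s.1.2)
  map_add' _ _ := rfl
  map_smul' _ _ := rfl

@[simp]
theorem nodeEval_apply (f : PolySpace d m) (s : bidIdxFinset d m) :
    nodeEval η θ d m f s = f.1 (η s.1.1, θ s.1.2) :=
  rfl

theorem single_mem_range_nodeEval (hη : Function.Injective η) (hθ : Function.Injective θ)
    (s : bidIdxFinset d m) : Pi.single s 1 ∈ LinearMap.range (nodeEval η θ d m) := by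
  have hs : BidIdx d m s.1 := mem_bidIdxFinset.1 s.2
  set v := nodeEval η θ d m ⟨newtonProd η θ s.1.1 s.1.2, newtonProd_mem_polySpace hs⟩
  have hv : v ∈ LinearMap.range (nodeEval η θ d m) := LinearMap.mem_range_self _ _
  have hvs : v s ≠ 0 := newtonProd_apply_self_ne_zero hη hθ _ _
  -- By triangularity, `v t ≠ 0` for `t ≠ s` forces `t` to lie on a strictly higher level.
  have hterm : ∀ t ∈ univ.erase s, v t • Pi.single t 1 ∈ LinearMap.range (nodeEval η θ d m) := by
    intro t ht
    by_cases hvt : v t = 0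
    · rw [hvt, zero_smul]
      exact Submodule.zero_mem _
    have hlt : s.1.1 + s.1.2 < t.1.1 + t.1.2 := by
      have hne : t.1 ≠ s.1 := Subtype.coe_injective.ne (ne_of_mem_erase ht)
      have hge : ¬(t.1.1 < s.1.1 ∨ t.1.2 < s.1.2) := fun h => hvt (newtonProd_apply_eq_zero h)
      rw [Ne, Prod.ext_iff] at hne
      omega
    have hd : t.1.1 + t.1.2 ≤ d := (mem_bidIdxFinset.1 t.2).add_le
    exact Submodule.smul_mem _ _ (single_mem_range_nodeEval hη hθ t)
  have hsingle : v s • Pi.single s 1 ∈ LinearMap.range (nodeEval η θ d m) := by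
    have hdecomp := pi_eq_sum_univ' v
    rw [← add_sum_erase _ _ (mem_univ s)] at hdecomp
    rw [eq_sub_of_add_eq hdecomp.symm]
    exact Submodule.sub_mem _ hv (Submodule.sum_mem _ hterm)
  simpa [smul_smul, inv_mul_cancel₀ hvs] using Submodule.smul_mem _ (v s)⁻¹ hsingle
termination_by d - (s.1.1 + s.1.2)

theorem nodeEval_bijective (hη : Function.Injective η) (hθ : Function.Injective θ) :
    Function.Bijective (nodeEval η θ d m) := by
  have hsurj : Function.Surjective (nodeEval η θ d m) := by
    rw [← LinearMap.range_eq_top, eq_top_iff, ← (Pi.basisFun ℂ _).span_eq,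
      Submodule.span_le, Set.range_subset_iff]
    intro s
    simpa using single_mem_range_nodeEval hη hθ s
  refine ⟨(LinearMap.injective_iff_surjective_of_finrank_eq_finrank ?_).2 hsurj, hsurj⟩
  refine le_antisymm ?_ (LinearMap.finrank_le_finrank_of_surjective hsurj)
  simpa using finrank_polySpace_le d m

theorem isFLIP_iff_nodeEval {p q : ℕ} (h : BidIdx d m (p, q)) {L : ℂ × ℂ → ℂ}
    (hL : L ∈ PolySpace d m) :
    IsFLIP η θ d m p q L ↔
      nodeEval η θ d m ⟨L, hL⟩ = Pi.single ⟨(p, q), mem_bidIdxFinset.2 h⟩ 1 := by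
  simp only [IsFLIP, hL, true_and, funext_iff, Subtype.forall, mem_bidIdxFinset, Prod.forall,
    nodeEval_apply, Pi.single_apply, Subtype.mk.injEq]
  constructor
  · rintro ⟨hself, hother⟩ k l hkl
    split_ifs with hkl'
    · obtain ⟨rfl, rfl⟩ := Prod.mk.inj hkl'
      exact hself
    · exact hother k l hkl hkl'
  · intro H
    exact ⟨by simpa using H p q h, fun k l hkl hne => by simpa [hne] using H k l hkl⟩

theorem existsUnique_isFLIP (hη : Function.Injective η) (hθ : Function.Injective θ) {p q : ℕ}
    (h : BidIdx d m (p, q)) : ∃! L, IsFLIP η θ d m p q L := by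
  obtain ⟨f, hf, hunique⟩ := (nodeEval_bijective hη hθ).existsUnique
    (Pi.single ⟨(p, q), mem_bidIdxFinset.2 h⟩ 1)
  refine ⟨f, (isFLIP_iff_nodeEval h f.2).2 hf, fun L hL => ?_⟩
  exact congrArg Subtype.val (hunique ⟨L, hL.1⟩ ((isFLIP_iff_nodeEval h hL.1).1 hL))

end NodeEval

theorem isFLIP_inv_smul_newtonProd {η θ : ℕ → ℂ} (hη : Function.Injective η)
    (hθ : Function.Injective θ) {d m p q : ℕ} (h : BidIdx d m (p, q))
    (htop : p + q = d ∨ (p + q + 1 = d ∧ m + 1 ≤ p)) :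
    IsFLIP η θ d m p q ((newtonProd η θ p q (η p, θ q))⁻¹ • newtonProd η θ p q) := by
  refine ⟨Submodule.smul_mem _ _ (newtonProd_mem_polySpace h),
    inv_mul_cancel₀ (newtonProd_apply_self_ne_zero hη hθ p q), fun k l hkl hne => ?_⟩
  have hlow : k < p ∨ l < q := by
    rw [Ne, Prod.mk.injEq] at hne
    unfold BidIdx at hkl
    omega
  rw [Pi.smul_apply, newtonProd_apply_eq_zero hlow, smul_zero]

theorem statement10_general (η θ : ℕ → ℂ)
    (hη : Function.Injective η) (hθ : Function.Injective θ)
    (d m : ℕ) :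
    (∀ p q : ℕ, BidIdx d m (p, q) → ∃! L : (ℂ × ℂ) → ℂ, IsFLIP η θ d m p q L) ∧
    ∀ p q : ℕ, BidIdx d m (p, q) →
      (p + q = d ∨ (p + q + 1 = d ∧ m + 1 ≤ p)) →
      ∀ L : (ℂ × ℂ) → ℂ, IsFLIP η θ d m p q L →
        ∀ z w : ℂ,
          L (z, w) =
            (∏ i ∈ range p, (z - η i) / (η p - η i)) *
              ∏ j ∈ range q, (w - θ j) / (θ q - θ j) := by
  refine ⟨fun p q h => existsUnique_isFLIP hη hθ h, fun p q h htop L hL z w => ?_⟩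
  rw [(existsUnique_isFLIP hη hθ h).unique hL (isFLIP_inv_smul_newtonProd hη hθ h htop)]
  simp only [Pi.smul_apply, smul_eq_mul, newtonProd, prod_div_distrib]
  ring

/-- in the bidimensional intertwining setting (`N_{d−1} < N ≤ N_d`,
`m = N − N_{d−1} − 1`), every point of `Ω_N` has a unique FLIP, and if `p+q = d`,
or `p+q = d−1` with `p ≥ m+1`, then
`l^{(N)}_{(η_p,θ_q)}(z,w) = ∏_{i<p} (z−η_i)/(η_p−η_i) ⋅ ∏_{j<q} (w−θ_j)/(θ_q−θ_j)`. -/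
theorem statement10 (η θ : ℕ → ℂ)
    (hη : Function.Injective η) (hθ : Function.Injective θ)
    (N d m : ℕ) (hN : 1 ≤ N)
    (hlow : d * (d + 1) / 2 < N) (hhigh : N ≤ (d + 1) * (d + 2) / 2)
    (hm : N = d * (d + 1) / 2 + 1 + m) :
    (∀ p q : ℕ, BidIdx d m (p, q) → ∃! L : (ℂ × ℂ) → ℂ, IsFLIP η θ d m p q L) ∧
    ∀ p q : ℕ, BidIdx d m (p, q) →
      (p + q = d ∨ (p + q + 1 = d ∧ m + 1 ≤ p)) →
      ∀ L : (ℂ × ℂ) → ℂ, IsFLIP η θ d m p q L →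
        ∀ z w : ℂ,
          L (z, w) =
            (∏ i ∈ range p, (z - η i) / (η p - η i)) *
              ∏ j ∈ range q, (w - θ j) / (θ q - θ j) :=
  statement10_general η θ hη hθ d m
end

section
/- Let (η_i)_{i≥0} and (θ_j)_{j≥0} be sequences of pairwise distinct complex numbers, N ≥ 1 with associated integers d, m, and Ω_N, 𝒫_N as in the bidimensional intertwining setting. If the point (η_m, θ_{d−m−1}) belongs to Ω_N (case p = m, q = d−m−1, p+q = d−1), then for all (z,w) ∈ ℂ²: l^{(N)}_{(η_m,θ_{d−m−1})}(z,w) = ∏_{i=0}^{m−1} (z−η_i)/(η_m−η_i) × ∏_{j=0, j≠d−m−1}^{d−m} (w−θ_j)/(θ_{d−m−1}−θ_j). -/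
open Finset

/-! Over a lower set `S ⊆ ℕ × ℕ` the monomials `z^k w^l` and the Newton products
`∏_{i<k} (z - η_i) ⬝ ∏_{j<l} (w - θ_j)` span the same space, and the Newton products evaluated
on the grid `(η_k, θ_l)` form a system that is triangular for the product order with nonzero
diagonal; hence an element of `𝒫_N` is determined by its values on `Ω_N`. The product formula
has bidegree at most `(m, d - m)`, so it lies in `𝒫_N`, and it takes the prescribed values. -/

section Univariate

variable {R : Type*} [CommRing R]

def newton (ξ : ℕ → R) (j : ℕ) : R → R := fun z => ∏ i ∈ range j, (z - ξ i)

lemma pow_mem_span_newton (ξ : ℕ → R) (k : ℕ) :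
    (fun z => z ^ k) ∈ Submodule.span R (newton ξ '' Set.Iic k) := by
  induction k with
  | zero => exact Submodule.subset_span ⟨0, Set.mem_Iic.2 le_rfl, by funext z; simp [newton]⟩
  | succ k ih =>
    let mulX : (R → R) →ₗ[R] R → R := LinearMap.mulLeft R id
    have hmul : Submodule.span R (newton ξ '' Set.Iic k) ≤
        (Submodule.span R (newton ξ '' Set.Iic (k + 1))).comap mulX := by
      rw [Submodule.span_le]
      rintro _ ⟨j, hj, rfl⟩
      have hshift : mulX (newton ξ j) = newton ξ (j + 1) + ξ j • newton ξ j := by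
        funext z
        simp only [mulX, LinearMap.mulLeft_apply, newton, prod_range_succ, Pi.add_apply,
          Pi.mul_apply, Pi.smul_apply, smul_eq_mul, id]
        ring
      rw [SetLike.mem_coe, Submodule.mem_comap, hshift]
      exact add_mem (Submodule.subset_span ⟨j + 1, Nat.succ_le_succ hj, rfl⟩)
        (Submodule.smul_mem _ _ (Submodule.subset_span ⟨j, Nat.le_succ_of_le hj, rfl⟩))
    have hpow : (fun z : R => z ^ (k + 1)) = mulX fun z => z ^ k := by
      funext z
      simp [mulX, pow_succ, mul_comm]
    rw [hpow]
    exact hmul ih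

lemma newton_apply_eq_zero {ξ : ℕ → R} {i j : ℕ} (h : i < j) : newton ξ j (ξ i) = 0 :=
  prod_eq_zero (mem_range.2 h) (sub_self _)

lemma newton_apply_self_ne_zero [IsDomain R] {ξ : ℕ → R} (hξ : Function.Injective ξ) (j : ℕ) :
    newton ξ j (ξ j) ≠ 0 :=
  prod_ne_zero_iff.2 fun _ hi => sub_ne_zero.2 (hξ.ne (mem_range.1 hi).ne')

lemma eval_mem_span_pow {P : Polynomial R} {n : ℕ} (hP : P.natDegree ≤ n) :
    (fun z => P.eval z) ∈ Submodule.span R ((fun a z => z ^ a) '' Set.Iic n) := by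
  have hsum : (fun z => P.eval z) = ∑ a ∈ range (n + 1), P.coeff a • fun z : R => z ^ a := by
    funext z
    simp [Polynomial.eval_eq_sum_range' (Nat.lt_succ_of_le hP)]
  rw [hsum]
  exact Submodule.sum_mem _ fun a ha => Submodule.smul_mem _ _
    (Submodule.subset_span ⟨a, Nat.le_of_lt_succ (mem_range.1 ha), rfl⟩)

end Univariate

lemma prod_sub_div_mem_span_pow {K : Type*} [Field K] (ξ c : ℕ → K) (s : Finset ℕ) :
    (fun z => ∏ i ∈ s, (z - ξ i) / c i) ∈
      Submodule.span K ((fun a z => z ^ a) '' Set.Iic s.card) := by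
  have hpoly : (fun z => ∏ i ∈ s, (z - ξ i) / c i) =
      (∏ i ∈ s, c i)⁻¹ • fun z => (∏ i ∈ s, (Polynomial.X - Polynomial.C (ξ i))).eval z := by
    funext z
    simp only [Polynomial.eval_prod, Polynomial.eval_sub, Polynomial.eval_X, Polynomial.eval_C,
      Pi.smul_apply, smul_eq_mul]
    rw [prod_div_distrib, div_eq_inv_mul]
  rw [hpoly]
  exact Submodule.smul_mem _ _
    (eval_mem_span_pow (Polynomial.natDegree_finsetProd_X_sub_C_eq_card s ξ).le)

section Bivariate

variable {R : Type*} [CommRing R]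

lemma mul_mem_span_image2 {α β : Type*} {A : Set (α → R)} {B : Set (β → R)} {f : α → R}
    {g : β → R} (hf : f ∈ Submodule.span R A) (hg : g ∈ Submodule.span R B) :
    (fun p : α × β => f p.1 * g p.2) ∈
      Submodule.span R (Set.image2 (fun a b p => a p.1 * b p.2) A B) := by
  let T : (α → R) →ₗ[R] (β → R) →ₗ[R] α × β → R :=
    (LinearMap.mul R (α × β → R)).compl₁₂
      (LinearMap.funLeft R R Prod.fst) (LinearMap.funLeft R R Prod.snd)
  have := Submodule.apply_mem_map₂ T hf hg
  rwa [Submodule.map₂_span_span] at this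

def newtonBasis (η θ : ℕ → R) (t : ℕ × ℕ) : R × R → R :=
  fun p => newton η t.1 p.1 * newton θ t.2 p.2

lemma span_monomial_le_span_newtonBasis (η θ : ℕ → R) {S : Set (ℕ × ℕ)} (hS : IsLowerSet S) :
    Submodule.span R {f | ∃ k l : ℕ, (k, l) ∈ S ∧ f = fun p : R × R => p.1 ^ k * p.2 ^ l} ≤
      Submodule.span R (newtonBasis η θ '' S) := by
  rw [Submodule.span_le]
  rintro _ ⟨k, l, hkl, rfl⟩
  refine Submodule.span_mono ?_
    (mul_mem_span_image2 (pow_mem_span_newton η k) (pow_mem_span_newton θ l))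
  rintro _ ⟨_, ⟨i, hi, rfl⟩, _, ⟨j, hj, rfl⟩, rfl⟩
  exact ⟨(i, j), hS (Prod.mk_le_mk.2 ⟨hi, hj⟩) hkl, rfl⟩

lemma newtonBasis_apply_eq_zero_of_not_le {η θ : ℕ → R} {u t : ℕ × ℕ} (h : ¬u ≤ t) :
    newtonBasis η θ u (η t.1, θ t.2) = 0 := by
  rw [Prod.le_def, not_and_or, not_le, not_le] at h
  rcases h with h | h
  · exact mul_eq_zero_of_left (newton_apply_eq_zero h) _
  · exact mul_eq_zero_of_right _ (newton_apply_eq_zero h)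

lemma newtonBasis_apply_self_ne_zero [IsDomain R] {η θ : ℕ → R} (hη : Function.Injective η)
    (hθ : Function.Injective θ) (t : ℕ × ℕ) : newtonBasis η θ t (η t.1, θ t.2) ≠ 0 :=
  mul_ne_zero (newton_apply_self_ne_zero hη t.1) (newton_apply_self_ne_zero hθ t.2)

theorem eq_zero_of_mem_span_newtonBasis [IsDomain R] {η θ : ℕ → R} (hη : Function.Injective η)
    (hθ : Function.Injective θ) {S : Set (ℕ × ℕ)} {f : R × R → R}
    (hf : f ∈ Submodule.span R (newtonBasis η θ '' S))
    (hvanish : ∀ t ∈ S, f (η t.1, θ t.2) = 0) : f = 0 := by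
  obtain ⟨c, hcS, rfl⟩ := (Finsupp.mem_span_image_iff_linearCombination R).1 hf
  suffices c = 0 by rw [this, map_zero]
  ext t
  induction t using WellFoundedLT.induction with
  | _ t ih =>
    by_cases ht : t ∈ S
    · have hval := hvanish t ht
      rw [Finsupp.linearCombination_apply, Finsupp.sum, Finset.sum_apply,
        Finset.sum_eq_single t] at hval
      · simpa [newtonBasis_apply_self_ne_zero hη hθ t] using hval
      · intro u _ hut
        by_cases hle : u ≤ t
        · simp [ih u (lt_of_le_of_ne hle hut)]
        · simp [newtonBasis_apply_eq_zero_of_not_le hle]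
      · intro hct
        simp [Finsupp.notMem_support_iff.1 hct]
    · exact Finsupp.notMem_support_iff.1 fun hct => ht (hcS hct)

end Bivariate

lemma isLowerSet_bidIdx (d m : ℕ) : IsLowerSet {p : ℕ × ℕ | BidIdx d m p} := by
  rintro ⟨k, l⟩ ⟨k', l'⟩ hle hkl
  rw [Prod.mk_le_mk] at hle
  simp only [Set.mem_ofPred_eq, BidIdx] at hkl ⊢
  omega

lemma polySpace_le_span_newtonBasis (η θ : ℕ → ℂ) (d m : ℕ) :
    PolySpace d m ≤ Submodule.span ℂ (newtonBasis η θ '' {t | BidIdx d m t}) :=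
  (span_monomial_le_span_newtonBasis η θ (isLowerSet_bidIdx d m) :)

lemma IsFLIP.unique {η θ : ℕ → ℂ} (hη : Function.Injective η) (hθ : Function.Injective θ)
    {d m p q : ℕ} {L L' : ℂ × ℂ → ℂ} (hL : IsFLIP η θ d m p q L)
    (hL' : IsFLIP η θ d m p q L') : L = L' := by
  have hle := polySpace_le_span_newtonBasis η θ d m
  refine sub_eq_zero.1 (eq_zero_of_mem_span_newtonBasis hη hθ (sub_mem (hle hL.1) (hle hL'.1)) ?_)
  rintro ⟨k, l⟩ hkl
  by_cases hpq : (k, l) = (p, q)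
  · obtain ⟨rfl, rfl⟩ := Prod.mk.inj hpq
    simp [hL.2.1, hL'.2.1]
  · simp [hL.2.2 k l hkl hpq, hL'.2.2 k l hkl hpq]

lemma isFLIP_prod {η θ : ℕ → ℂ} (hη : Function.Injective η) (hθ : Function.Injective θ)
    {d m : ℕ} (hmd : m + 1 ≤ d) :
    IsFLIP η θ d m m (d - m - 1) fun p =>
      (∏ i ∈ range m, (p.1 - η i) / (η m - η i)) *
        ∏ j ∈ (range (d - m + 1)).erase (d - m - 1), (p.2 - θ j) / (θ (d - m - 1) - θ j) := by
  set E := (range (d - m + 1)).erase (d - m - 1)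
  have hE : E.card = d - m := by
    rw [card_erase_of_mem (mem_range.2 (by omega)), card_range, Nat.add_sub_cancel]
  refine ⟨?_, ?_, ?_⟩
  · refine Submodule.span_mono ?_ (mul_mem_span_image2
      (prod_sub_div_mem_span_pow η (fun i => η m - η i) (range m))
      (prod_sub_div_mem_span_pow θ (fun j => θ (d - m - 1) - θ j) E))
    rintro _ ⟨_, ⟨a, ha, rfl⟩, _, ⟨b, hb, rfl⟩, rfl⟩
    rw [Set.mem_Iic, card_range] at ha
    rw [Set.mem_Iic, hE] at hb
    exact ⟨a, b, by simp only [BidIdx]; omega, rfl⟩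
  · dsimp only
    rw [prod_eq_one fun i hi => div_self (sub_ne_zero.2 (hη.ne (mem_range.1 hi).ne')),
      prod_eq_one fun j hj => div_self (sub_ne_zero.2 (hθ.ne (ne_of_mem_erase hj).symm)),
      one_mul]
  · intro k l hkl hne
    by_cases hk : k < m
    · exact mul_eq_zero_of_left (prod_eq_zero (mem_range.2 hk) (by simp)) _
    · have hlE : l ∈ E := by
        rw [Ne, Prod.mk.injEq] at hne
        simp only [BidIdx] at hkl
        exact mem_erase.2 ⟨by omega, mem_range.2 (by omega)⟩
      exact mul_eq_zero_of_right _ (prod_eq_zero hlE (by simp))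

theorem statement11_general (η θ : ℕ → ℂ)
    (hη : Function.Injective η) (hθ : Function.Injective θ)
    (d m : ℕ)
    (hmd : m + 1 ≤ d) :
    ∀ L : (ℂ × ℂ) → ℂ, IsFLIP η θ d m m (d - m - 1) L →
      ∀ z w : ℂ,
        L (z, w) =
          (∏ i ∈ range m, (z - η i) / (η m - η i)) *
            ∏ j ∈ (range (d - m + 1)).erase (d - m - 1),
              (w - θ j) / (θ (d - m - 1) - θ j) := by
  intro L hL z w
  exact congrFun (hL.unique hη hθ (isFLIP_prod hη hθ hmd)) (z, w)

/-- in the bidimensional intertwining setting, for the point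
`(η_m, θ_{d−m−1})` of `Ω_N` (case `p = m`, `q = d−m−1`, `p+q = d−1`),
`l^{(N)}_{(η_m,θ_{d−m−1})}(z,w) = ∏_{i<m} (z−η_i)/(η_m−η_i) ⋅
  ∏_{j≤d−m, j≠d−m−1} (w−θ_j)/(θ_{d−m−1}−θ_j)`. -/
theorem statement11 (η θ : ℕ → ℂ)
    (hη : Function.Injective η) (hθ : Function.Injective θ)
    (N d m : ℕ) (hN : 1 ≤ N)
    (hlow : d * (d + 1) / 2 < N) (hhigh : N ≤ (d + 1) * (d + 2) / 2)
    (hm : N = d * (d + 1) / 2 + 1 + m)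
    (hmd : m + 1 ≤ d) :
    ∀ L : (ℂ × ℂ) → ℂ, IsFLIP η θ d m m (d - m - 1) L →
      ∀ z w : ℂ,
        L (z, w) =
          (∏ i ∈ range m, (z - η i) / (η m - η i)) *
            ∏ j ∈ (range (d - m + 1)).erase (d - m - 1),
              (w - θ j) / (θ (d - m - 1) - θ j) :=
  statement11_general η θ hη hθ d m hmd
end
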